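/- arXiv:0909.0440 — 6 statements merged into one kernel-verified Lean document; each statement's English description precedes it below -/
import Mathlib

section
/- For r ∈ R and i ∈ I, the following are equivalent: (1) (r,i) ∈ Nil*(E(R,I)); (2) r ∈ Nil*(R) and jr + ji ∈ Nil*(I) for all j ∈ I; (3) r ∈ Nil*(R) and rj + ij ∈ Nil*(I) for all j ∈ I. -/
open MulOpposite

/-- The underlying type of the Dorroh (ideal) extension `E(R,I)`. -/
@[ext]
structure Dorroh (R : Type*) (I : Type*) where
  fst : R
  snd : I

/-- `I` is an `R`-rng: a nonunital ring with a compatible `(R,R)`-bimodule structure. -/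
class IsRRng (R I : Type*) [Ring R] [NonUnitalRing I] [Module R I] [Module Rᵐᵒᵖ I] : Prop where
  smul_op_smul : ∀ (r : R) (s : Rᵐᵒᵖ) (x : I), r • s • x = s • r • x
  smul_mul : ∀ (r : R) (x y : I), r • (x * y) = (r • x) * y
  mul_smul_eq : ∀ (r : R) (x y : I), x * (r • y) = (op r • x) * y
  op_smul_mul : ∀ (r : R) (x y : I), op r • (x * y) = x * (op r • y)

namespace Dorroh

variable {R I : Type*} [Ring R] [NonUnitalRing I] [Module R I] [Module Rᵐᵒᵖ I] [IsRRng R I]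

instance : Add (Dorroh R I) := ⟨fun p q => ⟨p.fst + q.fst, p.snd + q.snd⟩⟩
instance : Zero (Dorroh R I) := ⟨⟨0, 0⟩⟩
instance : Neg (Dorroh R I) := ⟨fun p => ⟨-p.fst, -p.snd⟩⟩
instance : Mul (Dorroh R I) :=
  ⟨fun p q => ⟨p.fst * q.fst, op q.fst • p.snd + p.fst • q.snd + p.snd * q.snd⟩⟩
instance : One (Dorroh R I) := ⟨⟨1, 0⟩⟩

set_option linter.unusedSectionVars false

@[simp] theorem add_fst (p q : Dorroh R I) : (p + q).fst = p.fst + q.fst := rfl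
@[simp] theorem add_snd (p q : Dorroh R I) : (p + q).snd = p.snd + q.snd := rfl
@[simp] theorem zero_fst : (0 : Dorroh R I).fst = 0 := rfl
@[simp] theorem zero_snd : (0 : Dorroh R I).snd = 0 := rfl
@[simp] theorem neg_fst (p : Dorroh R I) : (-p).fst = -p.fst := rfl
@[simp] theorem neg_snd (p : Dorroh R I) : (-p).snd = -p.snd := rfl
@[simp] theorem mul_fst (p q : Dorroh R I) : (p * q).fst = p.fst * q.fst := rfl
@[simp] theorem mul_snd (p q : Dorroh R I) :
    (p * q).snd = op q.fst • p.snd + p.fst • q.snd + p.snd * q.snd := rfl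
@[simp] theorem one_fst : (1 : Dorroh R I).fst = 1 := rfl
@[simp] theorem one_snd : (1 : Dorroh R I).snd = 0 := rfl

instance : Ring (Dorroh R I) where
  add_assoc a b c := by ext <;> simp [add_assoc]
  zero_add a := by ext <;> simp
  add_zero a := by ext <;> simp
  add_comm a b := by ext <;> simp [add_comm]
  neg_add_cancel a := by ext <;> simp
  mul_assoc a b c := by
    ext
    · simp [mul_assoc]
    · simp only [mul_snd, mul_fst, smul_add, mul_smul, op_mul, mul_add, add_mul,
        IsRRng.smul_mul, IsRRng.op_smul_mul, IsRRng.smul_op_smul, mul_assoc]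
      rw [← IsRRng.mul_smul_eq]
      abel
  one_mul a := by ext <;> simp
  mul_one a := by ext <;> simp
  left_distrib a b c := by
    ext
    · simp [mul_add]
    · simp [op_add, add_smul, smul_add, mul_add]
      abel
  right_distrib a b c := by
    ext
    · simp [add_mul]
    · simp [op_add, add_smul, smul_add, add_mul]
      abel
  zero_mul a := by ext <;> simp
  mul_zero a := by ext <;> simp
  nsmul := nsmulRec
  zsmul := zsmulRec

theorem mul_def (p q : Dorroh R I) :
    p * q = ⟨p.fst * q.fst, op q.fst • p.snd + p.fst • q.snd + p.snd * q.snd⟩ := rfl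

theorem one_def : (1 : Dorroh R I) = ⟨1, 0⟩ := rfl

theorem add_def (p q : Dorroh R I) : p + q = ⟨p.fst + q.fst, p.snd + q.snd⟩ := rfl

end Dorroh

/-- An `R`-subrng of the `R`-rng `I`: an `(R,R)`-subbimodule closed under multiplication. -/
def IsRSubrng (R : Type*) {I : Type*} [Ring R] [NonUnitalRing I] [Module R I]
    [Module Rᵐᵒᵖ I] (J : Set I) : Prop :=
  (0 : I) ∈ J ∧ (∀ x ∈ J, ∀ y ∈ J, x + y ∈ J) ∧ (∀ x ∈ J, -x ∈ J) ∧
    (∀ x ∈ J, ∀ y ∈ J, x * y ∈ J) ∧ (∀ (r : R), ∀ x ∈ J, r • x ∈ J) ∧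
    (∀ (r : R), ∀ x ∈ J, op r • x ∈ J)

/-- An `R`-ideal of the `R`-rng `I`: an `(R,R)`-subbimodule that is an ideal of `I`. -/
def IsRIdeal (R : Type*) {I : Type*} [Ring R] [NonUnitalRing I] [Module R I]
    [Module Rᵐᵒᵖ I] (J : Set I) : Prop :=
  IsRSubrng R J ∧ ∀ (i : I), ∀ j ∈ J, i * j ∈ J ∧ j * i ∈ J

/-- The annihilator `ann_R(I) = {r : R | rI = Ir = 0}`. -/
def annR (R I : Type*) [Ring R] [NonUnitalRing I] [Module R I] [Module Rᵐᵒᵖ I] : Set R :=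
  {r : R | ∀ x : I, r • x = 0 ∧ op r • x = 0}

/-- An element `x` of a rng is left quasi-regular if `x + k + kx = 0` for some `k`. -/
def IsLQR {I : Type*} [NonUnitalRing I] (x : I) : Prop := ∃ k : I, x + k + k * x = 0

/-- The Jacobson radical of a rng. -/
def rngRad (I : Type*) [NonUnitalRing I] : Set I := {x : I | ∀ j : I, IsLQR (j * x)}

/-- `npowNZ x n = x ^ (n+1)` in a nonunital ring. -/
def npowNZ {I : Type*} [NonUnitalRing I] (x : I) : ℕ → I
  | 0 => x
  | n + 1 => npowNZ x n * x

/-- An element of a rng is nilpotent if some positive power of it is zero. -/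
def IsNilElem {I : Type*} [NonUnitalRing I] (x : I) : Prop := ∃ n : ℕ, npowNZ x n = 0

/-- A subset of a rng is nil if each of its elements is nilpotent. -/
def SetIsNil {I : Type*} [NonUnitalRing I] (S : Set I) : Prop := ∀ x ∈ S, IsNilElem x

/-- A subset of a rng is nilpotent if for some `n` every product of `n+1` of its
elements vanishes. -/
def SetIsNilpotent {I : Type*} [NonUnitalRing I] (S : Set I) : Prop :=
  ∃ n : ℕ, ∀ (x : I) (l : List I), x ∈ S → (∀ y ∈ l, y ∈ S) → l.length = n →
    l.foldl (· * ·) x = 0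

/-- The upper nil radical of a rng: the sum of all of its nil (two-sided) ideals. -/
def upperNil (I : Type*) [NonUnitalRing I] : Set I :=
  ((sSup {J : TwoSidedIdeal I | ∀ x ∈ J, IsNilElem x} : TwoSidedIdeal I) : Set I)

/-- A rng is semiprime if it has no nonzero ideal of square zero. -/
def IsSemiprimeRng (I : Type*) [NonUnitalRing I] : Prop :=
  ∀ J : TwoSidedIdeal I, (∀ x ∈ J, ∀ y ∈ J, x * y = 0) → J = ⊥

/-- A rng is prime if the product of any two nonzero ideals is nonzero. -/
def IsPrimeRng (I : Type*) [NonUnitalRing I] : Prop :=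
  ∀ J K : TwoSidedIdeal I, (∀ x ∈ J, ∀ y ∈ K, x * y = 0) → J = ⊥ ∨ K = ⊥

/-- `ψ : I → R` restricts to an `R`-homomorphism on the subset `J ⊆ I`. -/
def IsRHomOn (R : Type*) {I : Type*} [Ring R] [NonUnitalRing I] [Module R I]
    [Module Rᵐᵒᵖ I] (J : Set I) (ψ : I → R) : Prop :=
  (∀ x ∈ J, ∀ y ∈ J, ψ (x + y) = ψ x + ψ y) ∧
    (∀ x ∈ J, ∀ y ∈ J, ψ (x * y) = ψ x * ψ y) ∧
    (∀ (r : R), ∀ x ∈ J, ψ (r • x) = r * ψ x) ∧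
    (∀ (r : R), ∀ x ∈ J, ψ (op r • x) = ψ x * r)

/-- `φ : I → R` is an `R`-homomorphism. -/
def IsRHom (R : Type*) {I : Type*} [Ring R] [NonUnitalRing I] [Module R I]
    [Module Rᵐᵒᵖ I] (φ : I → R) : Prop :=
  (∀ x y : I, φ (x + y) = φ x + φ y) ∧ (∀ x y : I, φ (x * y) = φ x * φ y) ∧
    (∀ (r : R) (x : I), φ (r • x) = r * φ x) ∧ (∀ (r : R) (x : I), φ (op r • x) = φ x * r)

/-- A two-sided ideal `P` of a ring is prime if `AB ⊆ P` implies `A ⊆ P` or `B ⊆ P`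
for all two-sided ideals `A`, `B`. -/
def TsiPrime {S : Type*} [Ring S] (P : TwoSidedIdeal S) : Prop :=
  ∀ A B : TwoSidedIdeal S, (∀ a ∈ A, ∀ b ∈ B, a * b ∈ P) → A ≤ P ∨ B ≤ P

/-- A two-sided ideal is maximal if it is a maximal proper ideal. -/
def TsiMaximal {S : Type*} [Ring S] (P : TwoSidedIdeal S) : Prop :=
  P ≠ ⊤ ∧ ∀ Q : TwoSidedIdeal S, P ≤ Q → Q = P ∨ Q = ⊤

/-- A two-sided-ideal subset of a ring. -/
def IsTwoSidedIdealSet (R : Type*) [Ring R] (P : Set R) : Prop :=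
  (0 : R) ∈ P ∧ (∀ x ∈ P, ∀ y ∈ P, x + y ∈ P) ∧ (∀ x ∈ P, -x ∈ P) ∧
    (∀ (r : R), ∀ x ∈ P, r * x ∈ P ∧ x * r ∈ P)

/-- A subset `P` of `R` is a prime ideal if it is a two-sided ideal and `AB ⊆ P`
implies `A ⊆ P` or `B ⊆ P` for all two-sided ideals `A, B`. -/
def IsPrimeIdealSet (R : Type*) [Ring R] (P : Set R) : Prop :=
  IsTwoSidedIdealSet R P ∧ ∀ A B : TwoSidedIdeal R,
    (∀ a ∈ A, ∀ b ∈ B, a * b ∈ P) → ((A : Set R) ⊆ P ∨ (B : Set R) ⊆ P)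

/-- A subset `P` of `R` is a semiprime ideal if it is a two-sided ideal and `A² ⊆ P`
implies `A ⊆ P` for all two-sided ideals `A`. -/
def IsSemiprimeIdealSet (R : Type*) [Ring R] (P : Set R) : Prop :=
  IsTwoSidedIdealSet R P ∧ ∀ A : TwoSidedIdeal R,
    (∀ a ∈ A, ∀ b ∈ A, a * b ∈ P) → (A : Set R) ⊆ P

section IdealData

variable (R I : Type*) [Ring R] [NonUnitalRing I] [Module R I] [Module Rᵐᵒᵖ I] [IsRRng R I]

/-- The data describing an ideal of `E(R,I)`: ideals `Z ⊆ A` of `R`, an `R`-subrng `J ⊆ I`,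
and a surjective `R`-homomorphism `φ : J → A/Z` (represented by a set-map `ψ : I → R`
choosing representatives), satisfying conditions (a) `ai - ji ∈ ker φ` and
(b) `ia - ij ∈ ker φ` for all `(a,-j) ∈ K`, `i ∈ I`. -/
def DorrohIdealData (A Z : TwoSidedIdeal R) (J : Set I) (ψ : I → R) : Prop :=
  Z ≤ A ∧ IsRSubrng R J ∧
    (∀ x ∈ J, ∀ y ∈ J, ψ (x + y) - (ψ x + ψ y) ∈ Z) ∧
    (∀ x ∈ J, ∀ y ∈ J, ψ (x * y) - ψ x * ψ y ∈ Z) ∧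
    (∀ (r : R), ∀ x ∈ J, ψ (r • x) - r * ψ x ∈ Z) ∧
    (∀ (r : R), ∀ x ∈ J, ψ (op r • x) - ψ x * r ∈ Z) ∧
    (∀ j ∈ J, ψ j ∈ A) ∧
    (∀ a ∈ A, ∃ j ∈ J, a - ψ j ∈ Z) ∧
    (∀ (a : R), ∀ j ∈ J, a ∈ A → a - ψ j ∈ Z → ∀ i : I,
      (a • i - j * i ∈ J ∧ ψ (a • i - j * i) ∈ Z) ∧
      (op a • i - i * j ∈ J ∧ ψ (op a • i - i * j) ∈ Z))

/-- The subset `K = {(a, -j) : a ∈ A, j ∈ J, a + Z = φ(j)}` of `E(R,I)`. -/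
def DorrohIdealSet (A Z : TwoSidedIdeal R) (J : Set I) (ψ : I → R) : Set (Dorroh R I) :=
  {p : Dorroh R I | p.fst ∈ A ∧ -p.snd ∈ J ∧ p.fst - ψ (-p.snd) ∈ Z}

end IdealData

variable (R I : Type*) [Ring R] [NonUnitalRing I] [Module R I] [Module Rᵐᵒᵖ I] [IsRRng R I]

open MulOpposite



section NilAux

variable {S : Type*} [NonUnitalRing S]

theorem npowNZ_add' (x : S) (m n : ℕ) :
    npowNZ x (m + n + 1) = npowNZ x m * npowNZ x n := by
  induction n with
  | zero => rfl
  | succ n ih =>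
    show npowNZ x ((m + n + 1) + 1) = _
    rw [npowNZ, ih]
    show _ = npowNZ x m * (npowNZ x n * x)
    rw [mul_assoc]

theorem npowNZ_npowNZ (x : S) (n m : ℕ) :
    npowNZ (npowNZ x n) m = npowNZ x (n + m * (n + 1)) := by
  induction m with
  | zero => simp [npowNZ]
  | succ m ih =>
    rw [npowNZ, ih, ← npowNZ_add' x (n + m * (n+1)) n]
    congr 1
    ring

theorem isNilElem_of_pow {x : S} (n : ℕ) (h : IsNilElem (npowNZ x n)) : IsNilElem x := by
  obtain ⟨m, hm⟩ := h
  exact ⟨n + m * (n + 1), by rw [← npowNZ_npowNZ, hm]⟩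

/-- Perturbation: a nilpotent element plus an element of a nil ideal is nilpotent. -/
theorem isNilElem_add_of_mem {J : TwoSidedIdeal S} (hJ : ∀ y ∈ J, IsNilElem y)
    {x b : S} (hx : IsNilElem x) (hb : b ∈ J) : IsNilElem (x + b) := by
  have key : ∀ n : ℕ, ∃ b' , b' ∈ J ∧ npowNZ (x + b) n = npowNZ x n + b' := by
    intro n
    induction n with
    | zero => exact ⟨b, hb, rfl⟩
    | succ n ih =>
      obtain ⟨b', hb', h⟩ := ih
      refine ⟨npowNZ x n * b + b' * (x + b), ?_, ?_⟩
      · exact J.add_mem (J.mul_mem_left _ _ hb) (J.mul_mem_right _ _ hb')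
      · show npowNZ (x + b) n * (x + b) = npowNZ x n * x + _
        rw [h, add_mul, mul_add, add_assoc]
  obtain ⟨n, hn⟩ := hx
  obtain ⟨b', hb', h⟩ := key n
  rw [hn, zero_add] at h
  exact isNilElem_of_pow n (h ▸ hJ b' hb')

private def nilUSet (S : Type*) [NonUnitalRing S] : Set S :=
  {x | ∃ J : TwoSidedIdeal S, (∀ y ∈ J, IsNilElem y) ∧ x ∈ J}

private def nilU (S : Type*) [NonUnitalRing S] : TwoSidedIdeal S :=
  TwoSidedIdeal.mk' (nilUSet S)
    ⟨⊥, fun y hy => by rw [TwoSidedIdeal.mem_bot] at hy; exact ⟨0, by simp [hy, npowNZ]⟩,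
      TwoSidedIdeal.zero_mem _⟩
    (by rintro a b ⟨J, hJ, ha⟩ ⟨K, hK, hb⟩
        refine ⟨J ⊔ K, fun y hy => ?_, TwoSidedIdeal.add_mem _
          (TwoSidedIdeal.mem_sup_left ha) (TwoSidedIdeal.mem_sup_right hb)⟩
        obtain ⟨j, hj, k, hk, rfl⟩ := TwoSidedIdeal.mem_sup.1 hy
        rw [add_comm]
        exact isNilElem_add_of_mem hJ (hK k hk) hj)
    (by rintro a ⟨J, hJ, ha⟩; exact ⟨J, hJ, J.neg_mem ha⟩)
    (by rintro a b ⟨J, hJ, hb⟩; exact ⟨J, hJ, J.mul_mem_left _ _ hb⟩)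
    (by rintro a b ⟨J, hJ, ha⟩; exact ⟨J, hJ, J.mul_mem_right _ _ ha⟩)

private theorem mem_nilU {S : Type*} [NonUnitalRing S] {x : S} :
    x ∈ nilU S ↔ x ∈ nilUSet S := by
  unfold nilU
  exact TwoSidedIdeal.mem_mk' _ _ _ _ _ _ _

theorem mem_upperNil_iff {S : Type*} [NonUnitalRing S] {x : S} :
    x ∈ upperNil S ↔ ∃ J : TwoSidedIdeal S, (∀ y ∈ J, IsNilElem y) ∧ x ∈ J := by
  constructor
  · intro hx
    have hle : sSup {J : TwoSidedIdeal S | ∀ x ∈ J, IsNilElem x} ≤ nilU S := by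
      refine sSup_le fun J hJ => ?_
      intro y hy
      exact mem_nilU.2 ⟨J, hJ, hy⟩
    exact mem_nilU.1 (hle hx)
  · rintro ⟨J, hJ, hx⟩
    have h1 : J ≤ sSup {J : TwoSidedIdeal S | ∀ x ∈ J, IsNilElem x} := le_sSup hJ
    exact h1 hx

theorem isNilElem_of_mem_upperNil {x : S} (hx : x ∈ upperNil S) : IsNilElem x := by
  obtain ⟨J, hJ, hx⟩ := mem_upperNil_iff.1 hx
  exact hJ x hx

theorem upperNil_zero_mem : (0 : S) ∈ upperNil S :=
  TwoSidedIdeal.zero_mem _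

theorem upperNil_add_mem {x y : S} (hx : x ∈ upperNil S) (hy : y ∈ upperNil S) :
    x + y ∈ upperNil S :=
  TwoSidedIdeal.add_mem _ hx hy

theorem upperNil_neg_mem {x : S} (hx : x ∈ upperNil S) : -x ∈ upperNil S :=
  TwoSidedIdeal.neg_mem _ hx

theorem upperNil_zsmul_mem {x : S} (n : ℤ) (hx : x ∈ upperNil S) : n • x ∈ upperNil S :=
  TwoSidedIdeal.zsmul_mem _ n hx

theorem upperNil_mul_mem_left (x : S) {y : S} (hy : y ∈ upperNil S) : x * y ∈ upperNil S :=
  TwoSidedIdeal.mul_mem_left _ x y hy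

theorem upperNil_mul_mem_right {x : S} (y : S) (hx : x ∈ upperNil S) : x * y ∈ upperNil S :=
  TwoSidedIdeal.mul_mem_right _ x y hx

end NilAux


section RStab

variable {A B : Type*} [Ring A] [NonUnitalRing B] [Module A B] [Module Aᵐᵒᵖ B] [IsRRng A B]

theorem npowNZ_smul_succ (r : A) (a : B) (n : ℕ) :
    npowNZ (r • a) (n + 1) = r • (npowNZ (op r • a) n * a) := by
  induction n with
  | zero =>
    show (r • a) * (r • a) = r • ((op r • a) * a)
    rw [← IsRRng.smul_mul, IsRRng.mul_smul_eq]
  | succ n ih =>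
    show npowNZ (r • a) (n + 1) * (r • a) = _
    rw [ih, ← IsRRng.smul_mul]
    congr 1
    rw [mul_assoc, IsRRng.mul_smul_eq, ← mul_assoc]
    rfl

theorem isNilElem_op_smul_of_mem {J : TwoSidedIdeal B} (hJ : ∀ y ∈ J, IsNilElem y)
    (r : A) {a : B} (ha : a ∈ J) : IsNilElem (op r • a) := by
  refine isNilElem_of_pow 1 (hJ _ ?_)
  show (op r • a) * (op r • a) ∈ J
  rw [← IsRRng.mul_smul_eq]
  exact J.mul_mem_right _ _ ha

theorem isNilElem_smul_of_mem {J : TwoSidedIdeal B} (hJ : ∀ y ∈ J, IsNilElem y)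
    (r : A) {a : B} (ha : a ∈ J) : IsNilElem (r • a) := by
  obtain ⟨n, hn⟩ := isNilElem_op_smul_of_mem hJ r ha
  exact ⟨n + 1, by rw [npowNZ_smul_succ, hn, zero_mul, smul_zero]⟩

theorem smul_mem_upperNil (r : A) {x : B} (hx : x ∈ upperNil B) : r • x ∈ upperNil B := by
  obtain ⟨J, hJ, hxJ⟩ := mem_upperNil_iff.1 hx
  refine mem_upperNil_iff.2 ⟨TwoSidedIdeal.mk'
    {z : B | ∃ a ∈ J, ∃ b ∈ J, z = r • a + b}
    ⟨0, J.zero_mem, 0, J.zero_mem, by simp⟩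
    (by rintro z w ⟨a, ha, b, hb, rfl⟩ ⟨a', ha', b', hb', rfl⟩
        exact ⟨a + a', J.add_mem ha ha', b + b', J.add_mem hb hb',
          by rw [smul_add]; abel⟩)
    (by rintro z ⟨a, ha, b, hb, rfl⟩
        exact ⟨-a, J.neg_mem ha, -b, J.neg_mem hb, by rw [smul_neg]; abel⟩)
    (by intro w z hz
        obtain ⟨a, ha, b, hb, rfl⟩ := hz
        refine ⟨0, J.zero_mem, (op r • w) * a + w * b,
          J.add_mem (J.mul_mem_left _ _ ha) (J.mul_mem_left _ _ hb), ?_⟩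
        rw [smul_zero, zero_add, mul_add, IsRRng.mul_smul_eq])
    (by intro z w hz
        obtain ⟨a, ha, b, hb, rfl⟩ := hz
        exact ⟨a * w, J.mul_mem_right _ _ ha, b * w, J.mul_mem_right _ _ hb,
          by rw [add_mul, IsRRng.smul_mul]⟩), ?_, ?_⟩
  · intro y hy
    rw [TwoSidedIdeal.mem_mk'] at hy
    obtain ⟨a, ha, b, hb, rfl⟩ := hy
    exact isNilElem_add_of_mem hJ (isNilElem_smul_of_mem hJ r ha) hb
  · rw [TwoSidedIdeal.mem_mk']
    exact ⟨x, hxJ, 0, J.zero_mem, by rw [add_zero]⟩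

theorem op_smul_mem_upperNil (r : A) {x : B} (hx : x ∈ upperNil B) :
    op r • x ∈ upperNil B := by
  obtain ⟨J, hJ, hxJ⟩ := mem_upperNil_iff.1 hx
  refine mem_upperNil_iff.2 ⟨TwoSidedIdeal.mk'
    {z : B | ∃ a ∈ J, ∃ b ∈ J, z = op r • a + b}
    ⟨0, J.zero_mem, 0, J.zero_mem, by simp⟩
    (by rintro z w ⟨a, ha, b, hb, rfl⟩ ⟨a', ha', b', hb', rfl⟩
        exact ⟨a + a', J.add_mem ha ha', b + b', J.add_mem hb hb',
          by rw [smul_add]; abel⟩)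
    (by rintro z ⟨a, ha, b, hb, rfl⟩
        exact ⟨-a, J.neg_mem ha, -b, J.neg_mem hb, by rw [smul_neg]; abel⟩)
    (by intro w z hz
        obtain ⟨a, ha, b, hb, rfl⟩ := hz
        exact ⟨w * a, J.mul_mem_left _ _ ha, w * b, J.mul_mem_left _ _ hb,
          by rw [mul_add, ← IsRRng.op_smul_mul]⟩)
    (by intro z w hz
        obtain ⟨a, ha, b, hb, rfl⟩ := hz
        refine ⟨0, J.zero_mem, a * (r • w) + b * w,
          J.add_mem (J.mul_mem_right _ _ ha) (J.mul_mem_right _ _ hb), ?_⟩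
        rw [smul_zero, zero_add, add_mul, IsRRng.mul_smul_eq]), ?_, ?_⟩
  · intro y hy
    rw [TwoSidedIdeal.mem_mk'] at hy
    obtain ⟨a, ha, b, hb, rfl⟩ := hy
    exact isNilElem_add_of_mem hJ (isNilElem_op_smul_of_mem hJ r ha) hb
  · rw [TwoSidedIdeal.mem_mk']
    exact ⟨x, hxJ, 0, J.zero_mem, by rw [add_zero]⟩

theorem dorroh_npowNZ_fst (p : Dorroh A B) (n : ℕ) :
    (npowNZ p n).fst = npowNZ p.fst n := by
  induction n with
  | zero => rfl
  | succ n ih => show (npowNZ p n * p).fst = npowNZ p.fst n * p.fst; rw [Dorroh.mul_fst, ih]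

theorem dorroh_npowNZ_mk_zero (x : B) (n : ℕ) :
    npowNZ (⟨0, x⟩ : Dorroh A B) n = ⟨0, npowNZ x n⟩ := by
  induction n with
  | zero => rfl
  | succ n ih =>
    show npowNZ (⟨0, x⟩ : Dorroh A B) n * ⟨0, x⟩ = _
    rw [ih, Dorroh.mul_def]
    simp [npowNZ]

end RStab

/-- `(r,i) ∈ Nil*(E(R,I))` iff `r ∈ Nil*(R)` and `jr + ji ∈ Nil*(I)` for all `j ∈ I`,
iff `r ∈ Nil*(R)` and `rj + ij ∈ Nil*(I)` for all `j ∈ I`. -/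
theorem dorroh_upperNil_mem_iff (r : R) (i : I) :
    ((⟨r, i⟩ : Dorroh R I) ∈ upperNil (Dorroh R I) ↔
      (r ∈ upperNil R ∧ ∀ j : I, op r • j + j * i ∈ upperNil I)) ∧
    ((⟨r, i⟩ : Dorroh R I) ∈ upperNil (Dorroh R I) ↔
      (r ∈ upperNil R ∧ ∀ j : I, r • j + i * j ∈ upperNil I)) := by
  classical
  -- (1) implies the first component is in `Nil*(R)`
  have h1r : ∀ a : R, ∀ x : I, (⟨a, x⟩ : Dorroh R I) ∈ upperNil (Dorroh R I) →
      a ∈ upperNil R := by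
    intro a x h
    refine mem_upperNil_iff.2 ⟨TwoSidedIdeal.mk'
      {a : R | ∃ x : I, (⟨a, x⟩ : Dorroh R I) ∈ upperNil (Dorroh R I)}
      ⟨0, upperNil_zero_mem⟩
      (by rintro c d ⟨u, hu⟩ ⟨v, hv⟩
          refine ⟨u + v, ?_⟩
          have h2 := upperNil_add_mem hu hv
          have e : (⟨c, u⟩ : Dorroh R I) + ⟨d, v⟩ = ⟨c + d, u + v⟩ := rfl
          rwa [e] at h2)
      (by rintro c ⟨u, hu⟩
          exact ⟨-u, upperNil_neg_mem hu⟩)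
      (by intro c d hd
          obtain ⟨u, hu⟩ := hd
          refine ⟨c • u, ?_⟩
          have h2 := upperNil_mul_mem_left (⟨c, 0⟩ : Dorroh R I) hu
          have e : (⟨c, 0⟩ : Dorroh R I) * ⟨d, u⟩ = ⟨c * d, c • u⟩ := by
            rw [Dorroh.mul_def]; ext <;> simp
          rwa [e] at h2)
      (by intro c d hc
          obtain ⟨u, hu⟩ := hc
          refine ⟨op d • u, ?_⟩
          have h2 := upperNil_mul_mem_right (⟨d, 0⟩ : Dorroh R I) hu
          have e : (⟨c, u⟩ : Dorroh R I) * ⟨d, 0⟩ = ⟨c * d, op d • u⟩ := by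
            rw [Dorroh.mul_def]; ext <;> simp
          rwa [e] at h2), ?_, ?_⟩
    · intro y hy
      rw [TwoSidedIdeal.mem_mk'] at hy
      obtain ⟨u, hu⟩ := hy
      obtain ⟨n, hn⟩ := isNilElem_of_mem_upperNil hu
      refine ⟨n, ?_⟩
      have h3 := congrArg Dorroh.fst hn
      rwa [dorroh_npowNZ_fst] at h3
    · rw [TwoSidedIdeal.mem_mk']
      exact ⟨x, h⟩
  -- the trace ideal `{x | (0,x) ∈ Nil*(E)}` is contained in `Nil*(I)`
  have hI0 : ∀ x : I, (⟨(0 : R), x⟩ : Dorroh R I) ∈ upperNil (Dorroh R I) →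
      x ∈ upperNil I := by
    intro x h
    refine mem_upperNil_iff.2 ⟨TwoSidedIdeal.mk'
      {x : I | (⟨(0 : R), x⟩ : Dorroh R I) ∈ upperNil (Dorroh R I)}
      upperNil_zero_mem
      (by intro u v hu hv
          have h2 := upperNil_add_mem hu hv
          have e : (⟨(0:R), u⟩ : Dorroh R I) + ⟨0, v⟩ = ⟨0, u + v⟩ := by
            rw [Dorroh.add_def]; ext <;> simp
          rwa [e] at h2)
      (by intro u hu
          have h2 := upperNil_neg_mem hu
          have e : -(⟨(0:R), u⟩ : Dorroh R I) = ⟨0, -u⟩ := by ext <;> simp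
          rwa [e] at h2)
      (by intro w u hu
          have h2 := upperNil_mul_mem_left (⟨(0:R), w⟩ : Dorroh R I) hu
          have e : (⟨(0:R), w⟩ : Dorroh R I) * ⟨0, u⟩ = ⟨0, w * u⟩ := by
            rw [Dorroh.mul_def]; ext <;> simp
          rwa [e] at h2)
      (by intro u w hu
          have h2 := upperNil_mul_mem_right (⟨(0:R), w⟩ : Dorroh R I) hu
          have e : (⟨(0:R), u⟩ : Dorroh R I) * ⟨0, w⟩ = ⟨0, u * w⟩ := by
            rw [Dorroh.mul_def]; ext <;> simp
          rwa [e] at h2), ?_, ?_⟩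
    · intro y hy
      rw [TwoSidedIdeal.mem_mk'] at hy
      obtain ⟨n, hn⟩ := isNilElem_of_mem_upperNil hy
      rw [dorroh_npowNZ_mk_zero] at hn
      exact ⟨n, congrArg Dorroh.snd hn⟩
    · rw [TwoSidedIdeal.mem_mk']
      exact h
  -- absorption: if all left multiples of `x` lie in `Nil*(I)` then so does `x`
  have habsl : ∀ x : I, (∀ k : I, k * x ∈ upperNil I) → x ∈ upperNil I := by
    intro x hx
    have hsq : ∀ w z : I, (∀ n : ℤ, ∀ b : I, ∀ c ∈ upperNil I, z = n • x + x * b + c) →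
        True := fun _ _ _ => trivial
    refine mem_upperNil_iff.2 ⟨TwoSidedIdeal.mk'
      {z : I | ∃ n : ℤ, ∃ b : I, ∃ c ∈ upperNil I, z = n • x + x * b + c}
      ⟨0, 0, 0, upperNil_zero_mem, by simp⟩
      (by rintro z w ⟨n, b, c, hc, rfl⟩ ⟨n', b', c', hc', rfl⟩
          refine ⟨n + n', b + b', c + c', upperNil_add_mem hc hc', ?_⟩
          rw [add_zsmul, mul_add]; abel)
      (by rintro z ⟨n, b, c, hc, rfl⟩
          refine ⟨-n, -b, -c, upperNil_neg_mem hc, ?_⟩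
          rw [neg_zsmul, mul_neg]; abel)
      (by rintro w z ⟨n, b, c, hc, rfl⟩
          refine ⟨0, 0, w * (n • x + x * b + c), ?_, by simp⟩
          rw [mul_add, mul_add, mul_smul_comm, ← mul_assoc]
          exact upperNil_add_mem (upperNil_add_mem (upperNil_zsmul_mem n (hx w))
            (upperNil_mul_mem_right b (hx w))) (upperNil_mul_mem_left w hc))
      (by rintro z w ⟨n, b, c, hc, rfl⟩
          refine ⟨0, n • w + b * w, c * w, upperNil_mul_mem_right w hc, ?_⟩
          simp only [zero_zsmul, zero_add, add_mul, mul_add, smul_mul_assoc,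
            mul_smul_comm, mul_assoc]), ?_, ?_⟩
    · intro y hy
      rw [TwoSidedIdeal.mem_mk'] at hy
      obtain ⟨n, b, c, hc, rfl⟩ := hy
      have hzz : (n • x + x * b + c) * (n • x + x * b + c) ∈ upperNil I := by
        rw [mul_add, mul_add, mul_smul_comm, ← mul_assoc]
        exact upperNil_add_mem (upperNil_add_mem (upperNil_zsmul_mem n (hx _))
          (upperNil_mul_mem_right b (hx _))) (upperNil_mul_mem_left _ hc)
      exact isNilElem_of_pow 1 (isNilElem_of_mem_upperNil hzz)
    · rw [TwoSidedIdeal.mem_mk']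
      exact ⟨1, 0, 0, upperNil_zero_mem, by simp⟩
  -- absorption: if all right multiples of `x` lie in `Nil*(I)` then so does `x`
  have habsr : ∀ x : I, (∀ k : I, x * k ∈ upperNil I) → x ∈ upperNil I := by
    intro x hx
    refine mem_upperNil_iff.2 ⟨TwoSidedIdeal.mk'
      {z : I | ∃ n : ℤ, ∃ b : I, ∃ c ∈ upperNil I, z = n • x + b * x + c}
      ⟨0, 0, 0, upperNil_zero_mem, by simp⟩
      (by rintro z w ⟨n, b, c, hc, rfl⟩ ⟨n', b', c', hc', rfl⟩
          refine ⟨n + n', b + b', c + c', upperNil_add_mem hc hc', ?_⟩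
          rw [add_zsmul, add_mul]; abel)
      (by rintro z ⟨n, b, c, hc, rfl⟩
          refine ⟨-n, -b, -c, upperNil_neg_mem hc, ?_⟩
          rw [neg_zsmul, neg_mul]; abel)
      (by rintro w z ⟨n, b, c, hc, rfl⟩
          refine ⟨0, n • w + w * b, w * c, upperNil_mul_mem_left w hc, ?_⟩
          simp only [zero_zsmul, zero_add, add_mul, mul_add, smul_mul_assoc,
            mul_smul_comm, mul_assoc])
      (by rintro z w ⟨n, b, c, hc, rfl⟩
          refine ⟨0, 0, (n • x + b * x + c) * w, ?_, by simp⟩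
          rw [add_mul, add_mul, smul_mul_assoc, mul_assoc]
          exact upperNil_add_mem (upperNil_add_mem (upperNil_zsmul_mem n (hx w))
            (upperNil_mul_mem_left b (hx w))) (upperNil_mul_mem_right w hc)), ?_, ?_⟩
    · intro y hy
      rw [TwoSidedIdeal.mem_mk'] at hy
      obtain ⟨n, b, c, hc, rfl⟩ := hy
      have hzz : (n • x + b * x + c) * (n • x + b * x + c) ∈ upperNil I := by
        rw [add_mul, add_mul, smul_mul_assoc, mul_assoc]
        exact upperNil_add_mem (upperNil_add_mem (upperNil_zsmul_mem n (hx _))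
          (upperNil_mul_mem_left b (hx _))) (upperNil_mul_mem_right _ hc)
      exact isNilElem_of_pow 1 (isNilElem_of_mem_upperNil hzz)
    · rw [TwoSidedIdeal.mem_mk']
      exact ⟨1, 0, 0, upperNil_zero_mem, by simp⟩
  -- condition (2) implies condition (3)
  have h23 : (∀ j : I, op r • j + j * i ∈ upperNil I) →
      ∀ j : I, r • j + i * j ∈ upperNil I := by
    intro h j
    apply habsl
    intro k
    have e : k * (r • j + i * j) = (op r • k + k * i) * j := by
      rw [mul_add, IsRRng.mul_smul_eq r k j, ← mul_assoc, add_mul]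
    rw [e]
    exact upperNil_mul_mem_right j (h k)
  -- condition (3) implies condition (2)
  have h32 : (∀ j : I, r • j + i * j ∈ upperNil I) →
      ∀ j : I, op r • j + j * i ∈ upperNil I := by
    intro h j
    apply habsr
    intro k
    have e : (op r • j + j * i) * k = j * (r • k + i * k) := by
      rw [add_mul, ← IsRRng.mul_smul_eq r j k, mul_assoc, mul_add]
    rw [e]
    exact upperNil_mul_mem_left j (h k)
  -- conditions (2) and (3) together imply (1)
  have hback : r ∈ upperNil R → (∀ j : I, op r • j + j * i ∈ upperNil I) →
      (∀ j : I, r • j + i * j ∈ upperNil I) →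
      (⟨r, i⟩ : Dorroh R I) ∈ upperNil (Dorroh R I) := by
    intro hr h2 h3
    refine mem_upperNil_iff.2 ⟨TwoSidedIdeal.mk'
      {p : Dorroh R I | p.fst ∈ upperNil R ∧
        (∀ j : I, op p.fst • j + j * p.snd ∈ upperNil I) ∧
        (∀ j : I, p.fst • j + p.snd * j ∈ upperNil I)}
      ⟨upperNil_zero_mem, fun j => by simpa using (upperNil_zero_mem : (0:I) ∈ _),
        fun j => by simpa using (upperNil_zero_mem : (0:I) ∈ _)⟩
      (by intro p q hp hq
          refine ⟨upperNil_add_mem hp.1 hq.1, fun j => ?_, fun j => ?_⟩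
          · have e : op ((p + q).fst) • j + j * ((p + q).snd) =
                (op p.fst • j + j * p.snd) + (op q.fst • j + j * q.snd) := by
              rw [Dorroh.add_fst, Dorroh.add_snd, op_add, add_smul, mul_add]; abel
            rw [e]
            exact upperNil_add_mem (hp.2.1 j) (hq.2.1 j)
          · have e : ((p + q).fst) • j + ((p + q).snd) * j =
                (p.fst • j + p.snd * j) + (q.fst • j + q.snd * j) := by
              rw [Dorroh.add_fst, Dorroh.add_snd, add_smul, add_mul]; abel
            rw [e]
            exact upperNil_add_mem (hp.2.2 j) (hq.2.2 j))
      (by intro p hp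
          refine ⟨upperNil_neg_mem hp.1, fun j => ?_, fun j => ?_⟩
          · have e : op ((-p).fst) • j + j * ((-p).snd) =
                -(op p.fst • j + j * p.snd) := by
              rw [Dorroh.neg_fst, Dorroh.neg_snd, op_neg, neg_smul, mul_neg, neg_add]
            rw [e]
            exact upperNil_neg_mem (hp.2.1 j)
          · have e : ((-p).fst) • j + ((-p).snd) * j =
                -(p.fst • j + p.snd * j) := by
              rw [Dorroh.neg_fst, Dorroh.neg_snd, neg_smul, neg_mul, neg_add]
            rw [e]
            exact upperNil_neg_mem (hp.2.2 j))
      (by intro p q hq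
          obtain ⟨s, y⟩ := p
          obtain ⟨a, x⟩ := q
          obtain ⟨ha, hq2, hq3⟩ := hq
          refine ⟨upperNil_mul_mem_left s ha, fun j => ?_, fun j => ?_⟩
          · have e : op ((⟨s, y⟩ * ⟨a, x⟩ : Dorroh R I).fst) • j +
                j * ((⟨s, y⟩ * ⟨a, x⟩ : Dorroh R I).snd) =
                (op a • (op s • j) + (op s • j) * x) + (op a • (j * y) + (j * y) * x) := by
              rw [Dorroh.mul_fst, Dorroh.mul_snd, op_mul, mul_smul,
                mul_add, mul_add, IsRRng.mul_smul_eq s j x,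
                ← IsRRng.op_smul_mul a j y, ← mul_assoc]
              abel
            rw [e]
            exact upperNil_add_mem (hq2 (op s • j)) (hq2 (j * y))
          · have e : ((⟨s, y⟩ * ⟨a, x⟩ : Dorroh R I).fst) • j +
                ((⟨s, y⟩ * ⟨a, x⟩ : Dorroh R I).snd) * j =
                s • (a • j + x * j) + y * (a • j + x * j) := by
              rw [Dorroh.mul_fst, Dorroh.mul_snd, mul_smul,
                add_mul, add_mul, ← IsRRng.mul_smul_eq a y j,
                ← IsRRng.smul_mul s x j, mul_assoc, smul_add, mul_add]
              abel
            rw [e]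
            exact upperNil_add_mem (smul_mem_upperNil s (hq3 j))
              (upperNil_mul_mem_left y (hq3 j)))
      (by intro p q hp
          obtain ⟨a, x⟩ := p
          obtain ⟨s, y⟩ := q
          obtain ⟨ha, hp2, hp3⟩ := hp
          refine ⟨upperNil_mul_mem_right s ha, fun j => ?_, fun j => ?_⟩
          · have e : op ((⟨a, x⟩ * ⟨s, y⟩ : Dorroh R I).fst) • j +
                j * ((⟨a, x⟩ * ⟨s, y⟩ : Dorroh R I).snd) =
                op s • (op a • j + j * x) + (op a • j + j * x) * y := by
              rw [Dorroh.mul_fst, Dorroh.mul_snd, op_mul, mul_smul,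
                mul_add, mul_add, ← IsRRng.op_smul_mul s j x,
                IsRRng.mul_smul_eq a j y, ← mul_assoc, smul_add, add_mul]
              abel
            rw [e]
            exact upperNil_add_mem (op_smul_mem_upperNil s (hp2 j))
              (upperNil_mul_mem_right y (hp2 j))
          · have e : ((⟨a, x⟩ * ⟨s, y⟩ : Dorroh R I).fst) • j +
                ((⟨a, x⟩ * ⟨s, y⟩ : Dorroh R I).snd) * j =
                (a • (s • j) + x * (s • j)) + (a • (y * j) + x * (y * j)) := by
              rw [Dorroh.mul_fst, Dorroh.mul_snd, mul_smul,
                add_mul, add_mul, ← IsRRng.mul_smul_eq s x j,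
                ← IsRRng.smul_mul a y j, mul_assoc]
              abel
            rw [e]
            exact upperNil_add_mem (hp3 (s • j)) (hp3 (y * j))), ?_, ?_⟩
    · intro p hp
      rw [TwoSidedIdeal.mem_mk'] at hp
      obtain ⟨hfstN, hp2, hp3⟩ := hp
      obtain ⟨n, hn⟩ := isNilElem_of_mem_upperNil hfstN
      have hfz : (npowNZ p n).fst = 0 := by rw [dorroh_npowNZ_fst, hn]
      have hstep : npowNZ p (n + 1) =
          ⟨0, op p.fst • (npowNZ p n).snd + (npowNZ p n).snd * p.snd⟩ := by
        show npowNZ p n * p = _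
        rw [Dorroh.mul_def, hfz, zero_mul, zero_smul, add_zero]
      obtain ⟨m, hm⟩ := isNilElem_of_mem_upperNil (hp2 (npowNZ p n).snd)
      refine isNilElem_of_pow (n + 1) ⟨m, ?_⟩
      rw [hstep, dorroh_npowNZ_mk_zero, hm]
      rfl
    · rw [TwoSidedIdeal.mem_mk']
      exact ⟨hr, h2, h3⟩
  constructor
  · constructor
    · intro h
      refine ⟨h1r r i h, fun j => hI0 _ ?_⟩
      have h2 := upperNil_mul_mem_left (⟨0, j⟩ : Dorroh R I) h
      have e : (⟨0, j⟩ : Dorroh R I) * ⟨r, i⟩ = ⟨0, op r • j + j * i⟩ := by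
        rw [Dorroh.mul_def]; ext <;> simp
      rwa [e] at h2
    · rintro ⟨hr, h2⟩
      exact hback hr h2 (h23 h2)
  · constructor
    · intro h
      refine ⟨h1r r i h, fun j => hI0 _ ?_⟩
      have h2 := upperNil_mul_mem_right (⟨0, j⟩ : Dorroh R I) h
      have e : (⟨r, i⟩ : Dorroh R I) * ⟨0, j⟩ = ⟨0, r • j + i * j⟩ := by
        rw [Dorroh.mul_def]; ext <;> simp
      rwa [e] at h2
    · rintro ⟨hr, h3⟩
      exact hback hr (h32 h3) h3
end

section
/- Let I be a semiprime R-rng, J a nonzero R-subrng of I, and φ: J → R an R-homomorphism such that ij = iφ(j) and ji = φ(j)i for all i ∈ I and j ∈ J. Then φ is injective. -/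
open MulOpposite

variable (R I : Type*) [Ring R] [NonUnitalRing I] [Module R I] [Module Rᵐᵒᵖ I] [IsRRng R I]

open MulOpposite


/-- If `I` is a semiprime `R`-rng, `J` a nonzero `R`-subrng of `I`, and `φ : J → R` an
`R`-homomorphism with `ij = iφ(j)` and `ji = φ(j)i` for all `i ∈ I`, `j ∈ J`, then
`φ` is injective. -/
theorem rhom_injective_of_semiprime (hsemi : IsSemiprimeRng I) (J : Set I) (ψ : I → R)
    (hJ : IsRSubrng R J) (hne : ∃ x ∈ J, x ≠ 0) (hhom : IsRHomOn R J ψ)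
    (hcomp : ∀ i : I, ∀ j ∈ J, i * j = op (ψ j) • i ∧ j * i = ψ j • i) :
    ∀ j ∈ J, ∀ j' ∈ J, ψ j = ψ j' → j = j' := by
  intro j hj j' hj' heq
  obtain ⟨hadd, hmul, hsmul, hopsmul⟩ := hhom
  have h0 : ψ (0 : I) = 0 := by simpa using hsmul 0 0 hJ.1
  have hnegJ : -j' ∈ J := hJ.2.2.1 j' hj'
  have hneg : ψ (-j') = -ψ j' := by
    have h := hadd j' hj' (-j') hnegJ
    rw [add_neg_cancel, h0] at h
    exact (neg_eq_of_add_eq_zero_right h.symm).symm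
  set d := j + -j' with hd
  have hdJ : d ∈ J := hJ.2.1 j hj (-j') hnegJ
  have hψd : ψ d = 0 := by
    rw [hd, hadd j hj (-j') hnegJ, hneg, heq, add_neg_cancel]
  have hann : ∀ i : I, d * i = 0 ∧ i * d = 0 := by
    intro i
    obtain ⟨h1, h2⟩ := hcomp i d hdJ
    exact ⟨by rw [h2, hψd, zero_smul], by rw [h1, hψd, op_zero, zero_smul]⟩
  set T : TwoSidedIdeal I := TwoSidedIdeal.mk'
    {x : I | ∀ i : I, x * i = 0 ∧ i * x = 0}
    (by intro i; simp)
    (by intro x y hx hy i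
        exact ⟨by rw [add_mul, (hx i).1, (hy i).1, add_zero],
               by rw [mul_add, (hx i).2, (hy i).2, add_zero]⟩)
    (by intro x hx i
        exact ⟨by rw [neg_mul, (hx i).1, neg_zero], by rw [mul_neg, (hx i).2, neg_zero]⟩)
    (by intro x y hy i
        exact ⟨by rw [mul_assoc, (hy i).1, mul_zero], by rw [← mul_assoc, (hy (i * x)).2]⟩)
    (by intro x y hx i
        exact ⟨by rw [mul_assoc, (hx (y * i)).1], by rw [← mul_assoc, (hx i).2, zero_mul]⟩)
    with hT
  have hTbot : T = ⊥ := by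
    apply hsemi
    intro x hx y hy
    rw [hT, TwoSidedIdeal.mem_mk'] at hx
    exact (hx y).1
  have hdT : d ∈ T := by
    rw [hT, TwoSidedIdeal.mem_mk']
    exact hann
  rw [hTbot, TwoSidedIdeal.mem_bot] at hdT
  exact add_neg_eq_zero.mp hdT
end

section
/- E(R,I) is semiprime if and only if: (1) I is a semiprime rng; (2) there is no nonzero ideal A of R with A² = 0 and A ⊆ ann_R(I); and (3) there do not exist a nonzero R-subrng J ⊆ I and an R-homomorphism φ: J → R with J² = 0 such that ij = iφ(j) and ji = φ(j)i for all i ∈ I, j ∈ J. In particular, if R and I are both semiprime, then E(R,I) is semiprime. -/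
open MulOpposite

variable (R I : Type*) [Ring R] [NonUnitalRing I] [Module R I] [Module Rᵐᵒᵖ I] [IsRRng R I]

open MulOpposite

/-!
Let `K` be an ideal of `E = E(R,I)` with `K² = 0`. Its trace on `I = ker (E → R)` is a square-zero
ideal of `I`, so it vanishes by (1). Hence `(a, x) ∈ K` forces `a i + x i = 0 = i a + i x` for all
`i ∈ I`, since these are the `I`-components of `(a, x)(0, i)` and `(0, i)(a, x)`. In particular
`K ∩ R` is a square-zero ideal inside `ann_R(I)`, which vanishes by (2). So `K` is the graph
`{(ψ j, -j)}` of a map `ψ` on the projection `J` of `K` to `I`, and `(J, ψ)` satisfies the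
hypotheses of (3); thus `J = 0` and `K = 0`.

Conversely, each object excluded by (1)–(3) yields a nonzero `p ∈ E` with `p E p = 0`, which cannot
exist in a semiprime ring: `p = (a, 0)` for (2), `p = (ψ j, -j)` for (3), and for (1) first
`p = j s j` and then `p = j`, with `j ∈ J ⊆ I ⊆ E` and `s ∈ E`. If `R` and `I` are semiprime, then `ψ j r ψ j = ψ ((j r) j) = 0`, so `ψ = 0` on `J`, and `J`
lies in the two-sided annihilator of `I`, a square-zero ideal of `I`.
-/

namespace IsSemiprimeRng

theorem eq_zero_of_mem {S : Type*} [NonUnitalRing S] (hS : IsSemiprimeRng S)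
    {J : TwoSidedIdeal S} (hJ : ∀ x ∈ J, ∀ y ∈ J, x * y = 0) {x : S} (hx : x ∈ J) : x = 0 :=
  (TwoSidedIdeal.mem_bot _).1 (hS J hJ ▸ hx)

theorem eq_zero_of_forall_mul_eq_zero {S : Type*} [NonUnitalRing S] (hS : IsSemiprimeRng S)
    {a : S} (ha : ∀ s, s * a = 0 ∧ a * s = 0) : a = 0 := by
  let A : TwoSidedIdeal S := .mk' {x | ∀ s, s * x = 0 ∧ x * s = 0}
    (by simp)
    (fun hx hy s => by simp [mul_add, add_mul, (hx s).1, (hx s).2, (hy s).1, (hy s).2])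
    (fun hx s => by simp [(hx s).1, (hx s).2])
    (fun {x y} hy s => ⟨by rw [← mul_assoc, (hy _).1], by rw [mul_assoc, (hy s).2, mul_zero]⟩)
    (fun {x y} hx s => ⟨by rw [← mul_assoc, (hx s).1, zero_mul], by rw [mul_assoc, (hx _).2]⟩)
  exact hS.eq_zero_of_mem (J := A) (fun x _ y hy => ((TwoSidedIdeal.mem_mk' ..).1 hy x).1)
    ((TwoSidedIdeal.mem_mk' ..).2 ha)

theorem eq_zero_of_forall_mul_mul_eq_zero {S : Type*} [Ring S] (hS : IsSemiprimeRng S) {a : S}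
    (ha : ∀ s, a * s * a = 0) : a = 0 := by
  -- `span {a}` lies in the right annihilator `P` of `a S`, hence in the left annihilator `Q` of
  -- `span {a}`
  let P : TwoSidedIdeal S := .mk' {y | ∀ s, a * s * y = 0}
    (by simp)
    (fun hx hy s => by simp [mul_add, hx s, hy s])
    (fun hx s => by simp [hx s])
    (fun {x y} hy s => by rw [← mul_assoc, mul_assoc a, hy])
    (fun {x y} hx s => by rw [← mul_assoc, hx, zero_mul])
  have hP : TwoSidedIdeal.span {a} ≤ P := TwoSidedIdeal.span_le.2 (by simpa [P] using ha)
  let Q : TwoSidedIdeal S := .mk' {x | ∀ y ∈ TwoSidedIdeal.span {a}, x * y = 0}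
    (by simp)
    (fun hx hy y h => by simp [add_mul, hx y h, hy y h])
    (fun hx y h => by simp [hx y h])
    (fun {x y} hy z h => by rw [mul_assoc, hy z h, mul_zero])
    (fun {x y} hx z h => by rw [mul_assoc, hx _ (TwoSidedIdeal.mul_mem_left _ _ _ h)])
  have hQ : TwoSidedIdeal.span {a} ≤ Q := TwoSidedIdeal.span_le.2 fun _ hx => by
    rw [Set.mem_singleton_iff.1 hx]
    exact fun y hy => by simpa using (TwoSidedIdeal.mem_mk' ..).1 (hP hy) 1
  exact hS.eq_zero_of_mem (fun x hx y hy => (TwoSidedIdeal.mem_mk' ..).1 (hQ hx) y hy)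
    (TwoSidedIdeal.subset_span rfl)

theorem eq_zero_of_mem_of_ideal_mul_subset {S : Type*} [Ring S] (hS : IsSemiprimeRng S)
    (L : TwoSidedIdeal S) {J : Set S} (hJL : J ⊆ L) (hLJ : ∀ l ∈ L, ∀ j ∈ J, l * j ∈ J)
    (hJ : ∀ x ∈ J, ∀ y ∈ J, x * y = 0) {j : S} (hj : j ∈ J) : j = 0 := by
  -- `(jsj) t (jsj) = j ℓ j` with `ℓ ∈ L`, so `ℓ j ∈ J`: first every `jsj` vanishes, then `j`
  refine hS.eq_zero_of_forall_mul_mul_eq_zero fun s =>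
    hS.eq_zero_of_forall_mul_mul_eq_zero fun t => ?_
  have hl : s * j * t * j * s ∈ L := L.mul_mem_right _ _ (L.mul_mem_left _ _ (hJL hj))
  calc j * s * j * t * (j * s * j) = j * (s * j * t * j * s * j) := by noncomm_ring
    _ = 0 := hJ j hj _ (hLJ _ hl j hj)

end IsSemiprimeRng

theorem IsRHomOn.map_zero {R I : Type*} [Ring R] [NonUnitalRing I] [Module R I]
    [Module Rᵐᵒᵖ I] {J : Set I} {ψ : I → R} (hψ : IsRHomOn R J ψ) (h0 : (0 : I) ∈ J) :
    ψ 0 = 0 := by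
  simpa using hψ.1 0 h0 0 h0

theorem eq_zero_of_isRHomOn_of_isSemiprimeRng {R I : Type*} [Ring R] [NonUnitalRing I]
    [Module R I] [Module Rᵐᵒᵖ I] (hR : IsSemiprimeRng R) (hI : IsSemiprimeRng I) {J : Set I}
    {ψ : I → R} (hJ : IsRSubrng R J) (hψ : IsRHomOn R J ψ) (hJJ : ∀ x ∈ J, ∀ y ∈ J, x * y = 0)
    (hψJ : ∀ i : I, ∀ j ∈ J, i * j = op (ψ j) • i ∧ j * i = ψ j • i) {x : I} (hx : x ∈ J) :
    x = 0 := by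
  have hψx : ψ x = 0 := hR.eq_zero_of_forall_mul_mul_eq_zero fun r => by
    have hrx := hJ.2.2.2.2.2 r x hx
    rw [← hψ.2.2.2 r x hx, ← hψ.2.1 _ hrx _ hx, hJJ _ hrx _ hx, hψ.map_zero hJ.1]
  exact hI.eq_zero_of_forall_mul_eq_zero fun i => by simp [hψJ i x hx, hψx]

namespace Dorroh

variable {R I}

def inlHom : R →ₙ+* Dorroh R I where
  toFun r := ⟨r, 0⟩
  map_mul' r s := by ext <;> simp
  map_zero' := rfl
  map_add' r s := by ext <;> simp

def inrHom : I →ₙ+* Dorroh R I where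
  toFun x := ⟨0, x⟩
  map_mul' x y := by ext <;> simp
  map_zero' := rfl
  map_add' x y := by ext <;> simp

def fstHom : Dorroh R I →ₙ+* R where
  toFun := fst
  map_mul' _ _ := rfl
  map_zero' := rfl
  map_add' _ _ := rfl

@[simp] theorem inlHom_apply (r : R) : (inlHom r : Dorroh R I) = ⟨r, 0⟩ := rfl
@[simp] theorem inrHom_apply (x : I) : (inrHom x : Dorroh R I) = ⟨0, x⟩ := rfl
@[simp] theorem fstHom_apply (p : Dorroh R I) : fstHom p = p.fst := rfl

@[simp] theorem mk_eq_zero {R I : Type*} [Ring R] [NonUnitalRing I] {a : R} {x : I} :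
    (⟨a, x⟩ : Dorroh R I) = 0 ↔ a = 0 ∧ x = 0 :=
  Dorroh.ext_iff

theorem inlHom_mul (r : R) (p : Dorroh R I) : inlHom r * p = ⟨r * p.fst, r • p.snd⟩ := by
  ext <;> simp

theorem mul_inlHom (p : Dorroh R I) (r : R) :
    p * inlHom r = ⟨p.fst * r, op r • p.snd⟩ := by
  ext <;> simp

theorem inrHom_mul (i : I) (p : Dorroh R I) :
    inrHom i * p = inrHom (op p.fst • i + i * p.snd) := by
  ext <;> simp

theorem mul_inrHom (p : Dorroh R I) (i : I) :
    p * inrHom i = inrHom (p.fst • i + p.snd * i) := by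
  ext <;> simp

theorem isSemiprimeRng_of_isSemiprimeRng_dorroh (hE : IsSemiprimeRng (Dorroh R I)) :
    IsSemiprimeRng I := by
  intro J hJ
  refine eq_bot_iff.2 fun x hx => (TwoSidedIdeal.mem_bot _).2 ?_
  let L : TwoSidedIdeal (Dorroh R I) := TwoSidedIdeal.ker fstHom
  let J' : Set (Dorroh R I) := inrHom '' J
  have hJL : J' ⊆ L := by
    rintro _ ⟨j, -, rfl⟩
    exact (TwoSidedIdeal.mem_ker _).2 rfl
  have hLJ : ∀ l ∈ L, ∀ j ∈ J', l * j ∈ J' := by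
    rintro l hl _ ⟨j, hj, rfl⟩
    rw [TwoSidedIdeal.mem_ker, fstHom_apply] at hl
    exact ⟨l.snd * j, J.mul_mem_left _ _ hj, by ext <;> simp [hl]⟩
  have hJJ : ∀ y ∈ J', ∀ z ∈ J', y * z = 0 := by
    rintro _ ⟨y, hy, rfl⟩ _ ⟨z, hz, rfl⟩
    rw [← map_mul, hJ y hy z hz, map_zero]
  exact congrArg snd (hE.eq_zero_of_mem_of_ideal_mul_subset _ hJL hLJ hJJ ⟨x, hx, rfl⟩)

theorem eq_bot_of_subset_annR (hE : IsSemiprimeRng (Dorroh R I)) {A : TwoSidedIdeal R}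
    (hA : ∀ x ∈ A, ∀ y ∈ A, x * y = 0) (hAI : (A : Set R) ⊆ annR R I) : A = ⊥ := by
  refine eq_bot_iff.2 fun a ha => (TwoSidedIdeal.mem_bot _).2 ?_
  have : (⟨a, 0⟩ : Dorroh R I) = 0 := hE.eq_zero_of_forall_mul_mul_eq_zero fun s => by
    ext
    · simpa using hA _ (A.mul_mem_right _ _ ha) _ ha
    · simp [(hAI ha s.snd).1]
  exact (mk_eq_zero.1 this).1

theorem eq_zero_of_isRHomOn (hE : IsSemiprimeRng (Dorroh R I)) {J : Set I} {ψ : I → R}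
    (hJ : IsRSubrng R J) (hψ : IsRHomOn R J ψ) (hJJ : ∀ x ∈ J, ∀ y ∈ J, x * y = 0)
    (hψJ : ∀ i : I, ∀ j ∈ J, i * j = op (ψ j) • i ∧ j * i = ψ j • i) {x : I} (hx : x ∈ J) :
    x = 0 := by
  -- the graph `{(ψ j, -j)}` is a right ideal of square zero
  have hmul : ∀ y ∈ J, ∀ z ∈ J, (⟨ψ y, -y⟩ : Dorroh R I) * ⟨ψ z, -z⟩ = 0 := by
    intro y hy z hz
    ext
    · simp [← hψ.2.1 y hy z hz, hJJ y hy z hz, hψ.map_zero hJ.1]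
    · simp [← (hψJ y z hz).1, ← (hψJ z y hy).2, hJJ y hy z hz]
  have hright : ∀ y ∈ J, ∀ s : Dorroh R I,
      (⟨ψ y, -y⟩ : Dorroh R I) * s = ⟨ψ (op s.fst • y), -(op s.fst • y)⟩ := by
    intro y hy s
    ext
    · simp [hψ.2.2.2 _ y hy]
    · simp [(hψJ s.snd y hy).2]
  have : (⟨ψ x, -x⟩ : Dorroh R I) = 0 := hE.eq_zero_of_forall_mul_mul_eq_zero fun s => by
    rw [hright x hx, hmul _ (hJ.2.2.2.2.2 _ x hx) x hx]
  exact neg_eq_zero.1 (mk_eq_zero.1 this).2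

/-- Once `K ∩ R = 0`, `K` is the graph `{(graphFun K x, -x)}` over `graphDom K` (see
`graphFun_eq`); off `graphDom K`, `graphFun K` takes the junk value `0`. -/
def graphDom (K : TwoSidedIdeal (Dorroh R I)) : Set I := {x | ∃ a : R, (⟨a, -x⟩ : Dorroh R I) ∈ K}

open Classical in
noncomputable def graphFun (K : TwoSidedIdeal (Dorroh R I)) (x : I) : R :=
  if h : x ∈ graphDom K then h.choose else 0

section SquareZeroIdeal

variable {K : TwoSidedIdeal (Dorroh R I)}

theorem eq_zero_of_inrHom_mem (hI : IsSemiprimeRng I) (hK : ∀ p ∈ K, ∀ q ∈ K, p * q = 0)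
    {x : I} (hx : inrHom x ∈ K) : x = 0 := by
  refine hI.eq_zero_of_mem (J := K.comap inrHom) (fun y hy z hz => ?_)
    ((TwoSidedIdeal.mem_comap _).2 hx)
  have := hK _ ((TwoSidedIdeal.mem_comap _).1 hy) _ ((TwoSidedIdeal.mem_comap _).1 hz)
  rw [← map_mul] at this
  simpa using this

theorem op_fst_smul_add_mul_snd_eq_zero (hinr : ∀ x, inrHom x ∈ K → x = 0) {p : Dorroh R I}
    (hp : p ∈ K) (i : I) : op p.fst • i + i * p.snd = 0 :=
  hinr _ (inrHom_mul i p ▸ K.mul_mem_left _ _ hp)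

theorem fst_smul_add_snd_mul_eq_zero (hinr : ∀ x, inrHom x ∈ K → x = 0) {p : Dorroh R I}
    (hp : p ∈ K) (i : I) : p.fst • i + p.snd * i = 0 :=
  hinr _ (mul_inrHom p i ▸ K.mul_mem_right _ _ hp)

theorem eq_zero_of_inlHom_mem (hK : ∀ p ∈ K, ∀ q ∈ K, p * q = 0)
    (hinr : ∀ x, inrHom x ∈ K → x = 0)
    (hann : ∀ A : TwoSidedIdeal R, (∀ x ∈ A, ∀ y ∈ A, x * y = 0) → (A : Set R) ⊆ annR R I →
      A = ⊥)
    {r : R} (hr : inlHom r ∈ K) : r = 0 := by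
  have hA : ∀ x ∈ K.comap inlHom, ∀ y ∈ K.comap inlHom, x * y = 0 := fun x hx y hy => by
    have := hK _ ((TwoSidedIdeal.mem_comap _).1 hx) _ ((TwoSidedIdeal.mem_comap _).1 hy)
    rw [← map_mul] at this
    simpa using this
  have hAI : (K.comap inlHom : Set R) ⊆ annR R I := fun a ha i => by
    rw [SetLike.mem_coe, TwoSidedIdeal.mem_comap] at ha
    exact ⟨by simpa using fst_smul_add_snd_mul_eq_zero hinr ha i,
      by simpa using op_fst_smul_add_mul_snd_eq_zero hinr ha i⟩
  exact (TwoSidedIdeal.mem_bot _).1 (hann _ hA hAI ▸ (TwoSidedIdeal.mem_comap _).2 hr)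

theorem mk_graphFun_mem {x : I} (hx : x ∈ graphDom K) :
    (⟨graphFun K x, -x⟩ : Dorroh R I) ∈ K := by
  rw [graphFun, dif_pos hx]
  exact hx.choose_spec

theorem mk_graphFun_add_mem {x y : I} (hx : x ∈ graphDom K) (hy : y ∈ graphDom K) :
    (⟨graphFun K x + graphFun K y, -(x + y)⟩ : Dorroh R I) ∈ K := by
  convert K.add_mem (mk_graphFun_mem hx) (mk_graphFun_mem hy) using 1
  ext <;> simp [add_comm]

theorem mk_mul_graphFun_mem (r : R) {x : I} (hx : x ∈ graphDom K) :
    (⟨r * graphFun K x, -(r • x)⟩ : Dorroh R I) ∈ K := by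
  simpa only [inlHom_mul, smul_neg] using K.mul_mem_left (inlHom r) _ (mk_graphFun_mem hx)

theorem mk_graphFun_mul_mem {x : I} (hx : x ∈ graphDom K) (r : R) :
    (⟨graphFun K x * r, -(op r • x)⟩ : Dorroh R I) ∈ K := by
  simpa only [mul_inlHom, smul_neg] using K.mul_mem_right _ (inlHom r) (mk_graphFun_mem hx)

theorem graphFun_eq (hinl : ∀ r, inlHom r ∈ K → r = 0) {a : R} {x : I}
    (h : (⟨a, -x⟩ : Dorroh R I) ∈ K) : graphFun K x = a := by
  refine sub_eq_zero.1 (hinl _ ?_)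
  convert K.add_mem (mk_graphFun_mem ⟨a, h⟩) (K.neg_mem h) using 1
  ext <;> simp [sub_eq_add_neg]

theorem graphDom_mul_eq_zero (hK : ∀ p ∈ K, ∀ q ∈ K, p * q = 0)
    (hinr : ∀ x, inrHom x ∈ K → x = 0) {x y : I} (hx : x ∈ graphDom K) (hy : y ∈ graphDom K) :
    x * y = 0 := by
  have h₁ := op_fst_smul_add_mul_snd_eq_zero hinr (mk_graphFun_mem hy) x
  have h₂ := fst_smul_add_snd_mul_eq_zero hinr (mk_graphFun_mem hx) y
  have h₃ := congrArg snd (hK _ (mk_graphFun_mem hx) _ (mk_graphFun_mem hy))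
  simp only [mul_neg, neg_mul, add_neg_eq_zero] at h₁ h₂
  simpa [h₁, h₂] using h₃

theorem mul_graphDom (hinr : ∀ x, inrHom x ∈ K → x = 0) {j : I} (hj : j ∈ graphDom K) (i : I) :
    i * j = op (graphFun K j) • i ∧ j * i = graphFun K j • i := by
  have h₁ := op_fst_smul_add_mul_snd_eq_zero hinr (mk_graphFun_mem hj) i
  have h₂ := fst_smul_add_snd_mul_eq_zero hinr (mk_graphFun_mem hj) i
  simp only [mul_neg, neg_mul, add_neg_eq_zero] at h₁ h₂
  exact ⟨h₁.symm, h₂.symm⟩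

theorem isRSubrng_graphDom (hK : ∀ p ∈ K, ∀ q ∈ K, p * q = 0)
    (hinr : ∀ x, inrHom x ∈ K → x = 0) : IsRSubrng R (graphDom K) := by
  have h₀ : (0 : I) ∈ graphDom K := ⟨0, by rw [neg_zero]; exact K.zero_mem⟩
  exact ⟨h₀, fun x hx y hy => ⟨_, mk_graphFun_add_mem hx hy⟩,
    fun x hx => ⟨_, K.neg_mem (mk_graphFun_mem hx)⟩,
    fun x hx y hy => graphDom_mul_eq_zero hK hinr hx hy ▸ h₀,
    fun r x hx => ⟨_, mk_mul_graphFun_mem r hx⟩, fun r x hx => ⟨_, mk_graphFun_mul_mem hx r⟩⟩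

theorem isRHomOn_graphFun (hK : ∀ p ∈ K, ∀ q ∈ K, p * q = 0)
    (hinr : ∀ x, inrHom x ∈ K → x = 0) (hinl : ∀ r, inlHom r ∈ K → r = 0) :
    IsRHomOn R (graphDom K) (graphFun K) := by
  refine ⟨fun x hx y hy => graphFun_eq hinl (mk_graphFun_add_mem hx hy), fun x hx y hy => ?_,
    fun r x hx => graphFun_eq hinl (mk_mul_graphFun_mem r hx),
    fun r x hx => graphFun_eq hinl (mk_graphFun_mul_mem hx r)⟩
  have hfst := congrArg fst (hK _ (mk_graphFun_mem hx) _ (mk_graphFun_mem hy))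
  rw [graphDom_mul_eq_zero hK hinr hx hy,
    graphFun_eq hinl (a := 0) (x := 0) (by rw [neg_zero]; exact K.zero_mem)]
  simpa using hfst.symm

theorem eq_bot_of_graphDom (hinl : ∀ r, inlHom r ∈ K → r = 0)
    (h : ∀ x ∈ graphDom K, x = 0) : K = ⊥ := by
  refine eq_bot_iff.2 fun p hp => (TwoSidedIdeal.mem_bot _).2 ?_
  have hsnd : p.snd = 0 := neg_eq_zero.1 (h _ ⟨p.fst, by simpa using hp⟩)
  have hfst : p.fst = 0 := hinl _ (by simpa [← hsnd] using hp)
  ext <;> simp [hfst, hsnd]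

end SquareZeroIdeal

theorem isSemiprimeRng_of (hI : IsSemiprimeRng I)
    (hann : ∀ A : TwoSidedIdeal R, (∀ x ∈ A, ∀ y ∈ A, x * y = 0) → (A : Set R) ⊆ annR R I →
      A = ⊥)
    (hhom : ∀ (J : Set I) (ψ : I → R), IsRSubrng R J → IsRHomOn R J ψ →
      (∀ x ∈ J, ∀ y ∈ J, x * y = 0) → (∀ i : I, ∀ j ∈ J, i * j = op (ψ j) • i ∧ j * i = ψ j • i) →
      ∀ x ∈ J, x = 0) :
    IsSemiprimeRng (Dorroh R I) := by
  intro K hK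
  have hinr : ∀ x, inrHom x ∈ K → x = 0 := fun _ => eq_zero_of_inrHom_mem hI hK
  have hinl : ∀ r, inlHom r ∈ K → r = 0 := fun _ => eq_zero_of_inlHom_mem hK hinr hann
  exact eq_bot_of_graphDom hinl (hhom _ _ (isRSubrng_graphDom hK hinr)
    (isRHomOn_graphFun hK hinr hinl) (fun _ hx _ hy => graphDom_mul_eq_zero hK hinr hx hy)
    (fun i _ hj => mul_graphDom hinr hj i))

end Dorroh

/-- `E(R,I)` is semiprime iff `I` is semiprime, there is no nonzero square-zero ideal of
`R` inside `ann_R(I)`, and there is no nonzero square-zero `R`-subrng `J ⊆ I` with an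
`R`-homomorphism `φ : J → R` satisfying `ij = iφ(j)`, `ji = φ(j)i`. In particular, if
`R` and `I` are semiprime then so is `E(R,I)`. -/
theorem dorroh_semiprime_iff :
    (IsSemiprimeRng (Dorroh R I) ↔
      (IsSemiprimeRng I ∧
        (¬ ∃ A : TwoSidedIdeal R, A ≠ ⊥ ∧ (∀ x ∈ A, ∀ y ∈ A, x * y = 0) ∧
          (A : Set R) ⊆ annR R I) ∧
        (¬ ∃ (J : Set I) (ψ : I → R), IsRSubrng R J ∧ (∃ x ∈ J, x ≠ 0) ∧
          IsRHomOn R J ψ ∧ (∀ x ∈ J, ∀ y ∈ J, x * y = 0) ∧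
          (∀ i : I, ∀ j ∈ J, i * j = op (ψ j) • i ∧ j * i = ψ j • i)))) ∧
    (IsSemiprimeRng R → IsSemiprimeRng I → IsSemiprimeRng (Dorroh R I)) := by
  refine ⟨⟨fun hE => ⟨?_, ?_, ?_⟩, ?_⟩, fun hR hI => ?_⟩
  · exact Dorroh.isSemiprimeRng_of_isSemiprimeRng_dorroh hE
  · rintro ⟨A, hA0, hA, hAI⟩
    exact hA0 (Dorroh.eq_bot_of_subset_annR hE hA hAI)
  · rintro ⟨J, ψ, hJ, ⟨x, hx, hx0⟩, hψ, hJJ, hψJ⟩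
    exact hx0 (Dorroh.eq_zero_of_isRHomOn hE hJ hψ hJJ hψJ hx)
  · rintro ⟨hI, hann, hhom⟩
    refine Dorroh.isSemiprimeRng_of hI (fun A hA hAI => ?_) (fun J ψ hJ hψ hJJ hψJ x hx => ?_)
    · exact not_ne_iff.1 fun hA0 => hann ⟨A, hA0, hA, hAI⟩
    · exact not_ne_iff.1 fun hx0 => hhom ⟨J, ψ, hJ, ⟨x, hx, hx0⟩, hψ, hJJ, hψJ⟩
  · exact Dorroh.isSemiprimeRng_of hI (fun A hA _ => hR A hA)
      (fun _ _ hJ hψ hJJ hψJ _ hx => eq_zero_of_isRHomOn_of_isSemiprimeRng hR hI hJ hψ hJJ hψJ hx)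
end

section
/- Let I be a centrally generated R-rng. If I is a prime (respectively semiprime) rng, then ann_R(I) is a prime (respectively semiprime) ideal of R. Consequently, if E(R,I) is semiprime with I centrally generated, then R is semiprime. -/
open MulOpposite

variable (R I : Type*) [Ring R] [NonUnitalRing I] [Module R I] [Module Rᵐᵒᵖ I] [IsRRng R I]

open MulOpposite

/-!
For an ideal `A` of `R`, let `AI` be the left `R`-submodule of `I` spanned by `A • I`. Central
generation gives `Ia ⊆ AI` for `a ∈ A` (on a central generator `s`, `s a = a s`), which makes `AI`
an ideal of the rng `I`, and `(AI)(BI) ⊆ (AB)I`. Hence `AB ⊆ ann_R(I)` forces `(AI)(BI) = 0`, while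
`AI = 0` means `A ⊆ ann_R(I)`; primeness (semiprimeness) of `I` transfers to `ann_R(I)`. If
`A² = 0`, then `A × AI` is a square-zero ideal of `E(R,I)`, which is nonzero as soon as `A` is.
-/

open Pointwise

def IsCentrallyGenerated : Prop :=
  ∃ S : Set I, (∀ x ∈ S, ∀ r : R, r • x = op r • x) ∧ Submodule.span R S = ⊤

instance : SMulCommClass Rᵐᵒᵖ R I := ⟨fun s r x => (IsRRng.smul_op_smul r s x).symm⟩

omit [IsRRng R I] in
theorem annR_isTwoSidedIdealSet : IsTwoSidedIdealSet R (annR R I) := by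
  refine ⟨fun x => by simp, fun r hr s hs x => ?_, fun r hr x => ?_,
    fun s r hr => ⟨fun x => ?_, fun x => ?_⟩⟩
  · simp [add_smul, (hr x).1, (hr x).2, (hs x).1, (hs x).2]
  · simp [(hr x).1, (hr x).2]
  · simp [mul_smul, (hr x).1, (hr (op s • x)).2]
  · simp [mul_smul, (hr x).2, (hr (s • x)).1]

variable {R I}

variable (I) in
def smulSpan (A : TwoSidedIdeal R) : Submodule R I :=
  Submodule.span R ((A : Set R) • (Set.univ : Set I))

section smulSpan

variable {A B : TwoSidedIdeal R}

omit [Module Rᵐᵒᵖ I] [IsRRng R I] in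
theorem smul_mem_smulSpan {a : R} (ha : a ∈ A) (x : I) : a • x ∈ smulSpan I A :=
  Submodule.subset_span (Set.smul_mem_smul ha trivial)

theorem op_smul_mem_smulSpan (r : R) {x : I} (hx : x ∈ smulSpan I A) :
    op r • x ∈ smulSpan I A := by
  have : (smulSpan I A).map (DistribSMul.toLinearMap R I (op r)) ≤ smulSpan I A :=
    (Submodule.map_span_le _ _ _).mpr <| by
      rintro _ ⟨a, ha, i, -, rfl⟩
      rw [DistribSMul.toLinearMap_apply, smul_comm]
      exact smul_mem_smulSpan ha _
  exact this ⟨x, hx, rfl⟩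

theorem mul_mem_smulSpan_right {x : I} (hx : x ∈ smulSpan I A) (y : I) :
    x * y ∈ smulSpan I A := by
  induction hx using Submodule.span_induction with
  | mem x hx =>
    obtain ⟨a, ha, i, -, rfl⟩ := hx
    rw [← IsRRng.smul_mul]
    exact smul_mem_smulSpan ha _
  | zero => simp
  | add x z _ _ hx hz => rw [add_mul]; exact add_mem hx hz
  | smul t x _ hx => rw [← IsRRng.smul_mul]; exact Submodule.smul_mem _ t hx

omit [Module Rᵐᵒᵖ I] [IsRRng R I] in
theorem smul_eq_zero_of_mem_smulSpan (hAB : ∀ a ∈ A, ∀ b ∈ B, ∀ z : I, (a * b) • z = 0)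
    {a : R} (ha : a ∈ A) {x : I} (hx : x ∈ smulSpan I B) : a • x = 0 := by
  induction hx using Submodule.span_induction generalizing a with
  | mem x hx =>
    obtain ⟨b, hb, i, -, rfl⟩ := hx
    rw [smul_smul]
    exact hAB a ha b hb i
  | zero => exact smul_zero a
  | add x y _ _ hx hy => rw [smul_add, hx ha, hy ha, add_zero]
  | smul t x _ hx => rw [smul_smul]; exact hx (A.mul_mem_right a t ha)

end smulSpan

namespace IsCentrallyGenerated

variable (hI : IsCentrallyGenerated R I) {A B : TwoSidedIdeal R}
include hI

theorem op_smul_mem {N : Submodule R I} {a : R} (ha : ∀ y : I, a • y ∈ N) (x : I) :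
    op a • x ∈ N := by
  obtain ⟨S, hS, hspan⟩ := hI
  -- `x ↦ op a • x` is left `R`-linear and agrees with `x ↦ a • x` on the central generators.
  have : (Submodule.span R S).map (DistribSMul.toLinearMap R I (op a)) ≤ N :=
    (Submodule.map_span_le _ _ _).mpr fun s hs => by
      rw [DistribSMul.toLinearMap_apply, ← hS s hs]
      exact ha s
  exact this ⟨x, by simp [hspan], rfl⟩

theorem op_smul_mem_smulSpan {a : R} (ha : a ∈ A) (x : I) : op a • x ∈ smulSpan I A :=
  hI.op_smul_mem (smul_mem_smulSpan ha) x

theorem mul_mem_smulSpan_left {x : I} (hx : x ∈ smulSpan I A) (y : I) :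
    y * x ∈ smulSpan I A := by
  induction hx using Submodule.span_induction generalizing y with
  | mem x hx =>
    obtain ⟨a, ha, i, -, rfl⟩ := hx
    rw [IsRRng.mul_smul_eq]
    exact mul_mem_smulSpan_right (hI.op_smul_mem_smulSpan ha y) i
  | zero => simp
  | add x z _ _ hx hz => rw [mul_add]; exact add_mem (hx y) (hz y)
  | smul t x _ hx => rw [IsRRng.mul_smul_eq]; exact hx _

theorem mul_eq_zero_of_mem_smulSpan (hAB : ∀ a ∈ A, ∀ b ∈ B, ∀ z : I, (a * b) • z = 0)
    {x y : I} (hx : x ∈ smulSpan I A) (hy : y ∈ smulSpan I B) : x * y = 0 := by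
  induction hx using Submodule.span_induction with
  | mem x hx =>
    obtain ⟨a, ha, i, -, rfl⟩ := hx
    rw [← IsRRng.smul_mul]
    exact smul_eq_zero_of_mem_smulSpan hAB ha (hI.mul_mem_smulSpan_left hy i)
  | zero => exact zero_mul y
  | add x z _ _ hx hz => rw [add_mul, hx, hz, add_zero]
  | smul t x _ hx => rw [← IsRRng.smul_mul, hx, smul_zero]

theorem op_smul_eq_zero_of_mem_smulSpan (hAB : ∀ a ∈ A, ∀ b ∈ B, ∀ z : I, (a * b) • z = 0)
    {b : R} (hb : b ∈ B) {x : I} (hx : x ∈ smulSpan I A) : op b • x = 0 := by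
  induction hx using Submodule.span_induction with
  | mem x hx =>
    obtain ⟨a, ha, i, -, rfl⟩ := hx
    rw [smul_comm (op b) a i]
    exact smul_eq_zero_of_mem_smulSpan hAB ha (hI.op_smul_mem_smulSpan hb i)
  | zero => exact smul_zero _
  | add x z _ _ hx hz => rw [smul_add, hx, hz, add_zero]
  | smul t x _ hx => rw [smul_comm (op b) t x, hx, smul_zero]

def smulIdeal (A : TwoSidedIdeal R) : TwoSidedIdeal I :=
  TwoSidedIdeal.mk' (smulSpan I A) (zero_mem _) add_mem neg_mem
    (fun hx => hI.mul_mem_smulSpan_left hx _) (fun hx => mul_mem_smulSpan_right hx _)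

theorem mem_smulIdeal {x : I} : x ∈ hI.smulIdeal A ↔ x ∈ smulSpan I A :=
  TwoSidedIdeal.mem_mk' _ _ _ _ _ _ x

theorem smulIdeal_mul_eq_zero (hAB : ∀ a ∈ A, ∀ b ∈ B, a * b ∈ annR R I) :
    ∀ x ∈ hI.smulIdeal A, ∀ y ∈ hI.smulIdeal B, x * y = 0 := fun _ hx _ hy =>
  hI.mul_eq_zero_of_mem_smulSpan (fun a ha b hb z => (hAB a ha b hb z).1)
    (hI.mem_smulIdeal.mp hx) (hI.mem_smulIdeal.mp hy)

theorem subset_annR_of_smulIdeal_eq_bot (h : hI.smulIdeal A = ⊥) : (A : Set R) ⊆ annR R I := by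
  have eq_zero {z : I} (hz : z ∈ smulSpan I A) : z = 0 := by
    rw [← hI.mem_smulIdeal, h] at hz
    exact hz
  exact fun a ha x => ⟨eq_zero (smul_mem_smulSpan ha x), eq_zero (hI.op_smul_mem_smulSpan ha x)⟩

def dorrohIdeal (A : TwoSidedIdeal R) : TwoSidedIdeal (Dorroh R I) :=
  TwoSidedIdeal.mk' {p | p.fst ∈ A ∧ p.snd ∈ smulSpan I A}
    ⟨A.zero_mem, zero_mem _⟩
    (fun hp hq => ⟨A.add_mem hp.1 hq.1, add_mem hp.2 hq.2⟩)
    (fun hp => ⟨A.neg_mem hp.1, neg_mem hp.2⟩)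
    (fun hq => ⟨A.mul_mem_left _ _ hq.1,
      add_mem (add_mem (hI.op_smul_mem_smulSpan hq.1 _) (Submodule.smul_mem _ _ hq.2))
        (hI.mul_mem_smulSpan_left hq.2 _)⟩)
    (fun hp => ⟨A.mul_mem_right _ _ hp.1,
      add_mem (add_mem (_root_.op_smul_mem_smulSpan _ hp.2) (smul_mem_smulSpan hp.1 _))
        (mul_mem_smulSpan_right hp.2 _)⟩)

theorem mem_dorrohIdeal {p : Dorroh R I} :
    p ∈ hI.dorrohIdeal A ↔ p.fst ∈ A ∧ p.snd ∈ smulSpan I A :=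
  TwoSidedIdeal.mem_mk' _ _ _ _ _ _ p

theorem dorrohIdeal_mul_eq_zero (hA : ∀ a ∈ A, ∀ b ∈ A, a * b = 0) :
    ∀ p ∈ hI.dorrohIdeal A, ∀ q ∈ hI.dorrohIdeal A, p * q = 0 := by
  intro p hp q hq
  obtain ⟨hp₁, hp₂⟩ := hI.mem_dorrohIdeal.mp hp
  obtain ⟨hq₁, hq₂⟩ := hI.mem_dorrohIdeal.mp hq
  have hAA : ∀ a ∈ A, ∀ b ∈ A, ∀ z : I, (a * b) • z = 0 := fun a ha b hb z => by
    rw [hA a ha b hb, zero_smul]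
  ext
  · exact hA _ hp₁ _ hq₁
  · rw [Dorroh.mul_snd, hI.op_smul_eq_zero_of_mem_smulSpan hAA hq₁ hp₂,
      smul_eq_zero_of_mem_smulSpan hAA hp₁ hq₂, hI.mul_eq_zero_of_mem_smulSpan hAA hp₂ hq₂]
    simp

theorem eq_bot_of_dorrohIdeal_eq_bot (h : hI.dorrohIdeal A = ⊥) : A = ⊥ := by
  refine eq_bot_iff.mpr fun a ha => ?_
  have : (⟨a, 0⟩ : Dorroh R I) ∈ hI.dorrohIdeal A := hI.mem_dorrohIdeal.mpr ⟨ha, zero_mem _⟩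
  rw [h, TwoSidedIdeal.mem_bot] at this
  exact (TwoSidedIdeal.mem_bot R).mpr (congrArg Dorroh.fst this)

end IsCentrallyGenerated

/-- If `I` is a centrally generated `R`-rng that is prime (resp. semiprime), then
`ann_R(I)` is a prime (resp. semiprime) ideal of `R`; consequently, if `E(R,I)` is
semiprime then so is `R`. -/
theorem central_ann_prime
    (hcg : ∃ S : Set I, (∀ x ∈ S, ∀ r : R, r • x = op r • x) ∧ Submodule.span R S = ⊤) :
    (IsPrimeRng I → IsPrimeIdealSet R (annR R I)) ∧
    (IsSemiprimeRng I → IsSemiprimeIdealSet R (annR R I)) ∧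
    (IsSemiprimeRng (Dorroh R I) → IsSemiprimeRng R) := by
  have hI : IsCentrallyGenerated R I := hcg
  refine ⟨fun hprime => ⟨annR_isTwoSidedIdealSet R I, fun A B hAB => ?_⟩,
    fun hsemiprime => ⟨annR_isTwoSidedIdealSet R I, fun A hA => ?_⟩, fun hE A hA => ?_⟩
  · exact (hprime _ _ (hI.smulIdeal_mul_eq_zero hAB)).imp
      hI.subset_annR_of_smulIdeal_eq_bot hI.subset_annR_of_smulIdeal_eq_bot
  · exact hI.subset_annR_of_smulIdeal_eq_bot (hsemiprime _ (hI.smulIdeal_mul_eq_zero hA))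
  · exact hI.eq_bot_of_dorrohIdeal_eq_bot (hE _ (hI.dorrohIdeal_mul_eq_zero hA))
end

section
/- Let I be a nonzero R-rng. Then E(R,I) is a prime ring if and only if: (1) I is a prime rng; (2) ann_R(I) = 0; and (3) there do not exist a nonzero R-subrng J ⊆ I and an R-homomorphism φ: J → R such that ij = iφ(j) and ji = φ(j)i for all i ∈ I, j ∈ J. -/
open MulOpposite

variable (R I : Type*) [Ring R] [NonUnitalRing I] [Module R I] [Module Rᵐᵒᵖ I] [IsRRng R I]

open MulOpposite



section AuxLemmas

lemma tsi_eq_bot_iff {S : Type*} [NonUnitalRing S] (J : TwoSidedIdeal S) :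
    J = ⊥ ↔ ∀ x ∈ J, x = 0 := by
  constructor
  · rintro rfl x hx; exact (TwoSidedIdeal.mem_bot S).1 hx
  · intro h
    refine le_antisymm (fun x hx => (TwoSidedIdeal.mem_bot S).2 (h x hx)) (fun x hx => ?_)
    rw [(TwoSidedIdeal.mem_bot S).1 hx]; exact J.zero_mem

lemma prime_elem {S : Type*} [Ring S] (h : IsPrimeRng S) (a b : S)
    (hab : ∀ e : S, a * e * b = 0) : a = 0 ∨ b = 0 := by
  by_contra hcon
  push_neg at hcon
  obtain ⟨ha, hb⟩ := hcon
  set CA : Set S := {x | ∀ e : S, x * e * b = 0} with hCA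
  have CAr : ∀ {x y : S}, x ∈ CA → x * y ∈ CA := by
    intro x y hx e
    have h' := hx (y * e)
    simp only [mul_assoc] at h' ⊢
    exact h'
  have CAl : ∀ {x y : S}, y ∈ CA → x * y ∈ CA := by
    intro x y hy e
    have h' := hy e
    simp only [mul_assoc] at h' ⊢
    rw [h', mul_zero]
  set A : TwoSidedIdeal S := TwoSidedIdeal.mk' CA
    (fun e => by simp)
    (fun hx hy e => by rw [add_mul, add_mul, hx e, hy e, add_zero])
    (fun hx e => by rw [neg_mul, neg_mul, hx e, neg_zero])
    (fun hy => CAl hy) (fun hx => CAr hx) with hA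
  set B : TwoSidedIdeal S := TwoSidedIdeal.mk' {y | ∀ x ∈ CA, x * y = 0}
    (fun x _ => mul_zero x)
    (fun hy hz x hx => by rw [mul_add, hy x hx, hz x hx, add_zero])
    (fun hy x hx => by rw [mul_neg, hy x hx, neg_zero])
    (fun {c y} hy x hx => by rw [← mul_assoc]; exact hy (x * c) (CAr hx))
    (fun {y c} hy x hx => by rw [← mul_assoc, hy x hx, zero_mul]) with hB
  have hprod : ∀ x ∈ A, ∀ y ∈ B, x * y = 0 := by
    intro x hx y hy
    rw [hA, TwoSidedIdeal.mem_mk'] at hx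
    rw [hB, TwoSidedIdeal.mem_mk'] at hy
    exact hy x hx
  rcases h A B hprod with hbot | hbot
  · apply ha
    have haA : a ∈ A := by rw [hA, TwoSidedIdeal.mem_mk']; exact hab
    exact (tsi_eq_bot_iff A).1 hbot a haA
  · apply hb
    have hbB : b ∈ B := by
      rw [hB, TwoSidedIdeal.mem_mk']
      intro x hx
      have := hx 1
      rwa [mul_one] at this
    exact (tsi_eq_bot_iff B).1 hbot b hbB

end AuxLemmas

lemma dorroh_elem_prime (hp : IsPrimeRng (Dorroh R I)) (j k : I)
    (hjk : ∀ z : I, j * z * k = 0) : j = 0 ∨ k = 0 := by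
  set a : Dorroh R I := ⟨0, j⟩ with hA
  set b : Dorroh R I := ⟨0, k⟩ with hB
  have habz : ∀ m : Dorroh R I, m.fst = 0 → a * m * b = 0 := by
    rintro ⟨mf, ms⟩ hm
    simp only at hm
    subst hm
    have e1 : a * ⟨0, ms⟩ = (⟨0, j * ms⟩ : Dorroh R I) := by
      rw [hA]; ext <;> simp
    rw [e1]
    have e2 : (⟨0, j * ms⟩ : Dorroh R I) * b = (⟨0, j * ms * k⟩ : Dorroh R I) := by
      rw [hB]; ext <;> simp
    rw [e2, hjk ms]
    rfl
  have haeb : ∀ e : Dorroh R I, a * e * b = 0 := by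
    intro e
    have hs : ∀ e' : Dorroh R I, (a * e * b) * e' * (a * e * b) = 0 := by
      intro e'
      have hfst : (e * b * e' * a * e).fst = 0 := by
        rw [hB]; simp
      have hre : (a * e * b) * e' * (a * e * b) = a * (e * b * e' * a * e) * b := by
        simp only [mul_assoc]
      rw [hre]
      exact habz _ hfst
    rcases prime_elem hp _ _ hs with h | h <;> exact h
  rcases prime_elem hp a b haeb with h | h
  · left; exact congrArg Dorroh.snd h
  · right; exact congrArg Dorroh.snd h

/-- For a nonzero `R`-rng `I`, the ring `E(R,I)` is prime iff `I` is a prime rng,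
`ann_R(I) = 0`, and there do not exist a nonzero `R`-subrng `J ⊆ I` and an
`R`-homomorphism `φ : J → R` with `ij = iφ(j)`, `ji = φ(j)i` for all `i ∈ I`, `j ∈ J`. -/
theorem dorroh_prime_iff (hI : ∃ x : I, x ≠ 0) :
    IsPrimeRng (Dorroh R I) ↔
      (IsPrimeRng I ∧ annR R I = {0} ∧
        ¬ ∃ (J : Set I) (ψ : I → R), IsRSubrng R J ∧ (∃ x ∈ J, x ≠ 0) ∧
          IsRHomOn R J ψ ∧
          (∀ i : I, ∀ j ∈ J, i * j = op (ψ j) • i ∧ j * i = ψ j • i)) := by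
  classical
  constructor
  · -- forward direction
    intro hp
    refine ⟨?_, ?_, ?_⟩
    · -- I is prime
      intro J K hJK
      rw [tsi_eq_bot_iff, tsi_eq_bot_iff]
      by_contra hcon
      push_neg at hcon
      obtain ⟨⟨j, hjJ, hj⟩, ⟨k, hkK, hk⟩⟩ := hcon
      rcases dorroh_elem_prime R I hp j k
        (fun z => hJK _ (J.mul_mem_right _ _ hjJ) k hkK) with h | h
      · exact hj h
      · exact hk h
    · -- annihilator is zero
      ext r
      simp only [annR, Set.mem_setOf_eq, Set.mem_singleton_iff]
      constructor
      · intro hr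
        have hr1 : ∀ x : I, r • x = 0 := fun x => (hr x).1
        obtain ⟨x₀, hx₀⟩ := hI
        have hside : ∀ e : Dorroh R I, (⟨r, 0⟩ : Dorroh R I) * e * ⟨0, x₀⟩ = 0 := by
          intro e
          ext
          · simp
          · simp [mul_smul, hr1]
        rcases prime_elem hp _ _ hside with h | h
        · exact congrArg Dorroh.fst h
        · exact absurd (congrArg Dorroh.snd h) hx₀
      · rintro rfl x
        simp
    · -- nonexistence of (J, ψ)
      rintro ⟨J, ψ, hsub, ⟨j₀, hj₀J, hj₀⟩, hhom, hrel⟩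
      obtain ⟨h0J, haddJ, hnegJ, hmulJ, hsmulJ, hopJ⟩ := hsub
      obtain ⟨hψadd, hψmul, hψsmul, hψop⟩ := hhom
      have hψ0 : ψ 0 = 0 := by
        have h' := hψadd 0 h0J 0 h0J
        rw [add_zero] at h'
        exact (left_eq_add.mp h')
      have hψneg : ∀ x ∈ J, ψ (-x) = -ψ x := by
        intro x hx
        have h' := hψadd x hx (-x) (hnegJ x hx)
        rw [add_neg_cancel, hψ0] at h'
        exact eq_neg_of_add_eq_zero_right h'.symm
      -- the ideal K
      have pf0 : (0 : Dorroh R I) ∈ {p : Dorroh R I | -p.snd ∈ J ∧ p.fst = ψ (-p.snd)} := by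
        constructor
        · show -(0 : Dorroh R I).snd ∈ J
          rw [Dorroh.zero_snd, neg_zero]; exact h0J
        · show (0 : Dorroh R I).fst = ψ (-(0 : Dorroh R I).snd)
          rw [Dorroh.zero_snd, Dorroh.zero_fst, neg_zero, hψ0]
      have pfadd : ∀ {p q : Dorroh R I},
          p ∈ {p : Dorroh R I | -p.snd ∈ J ∧ p.fst = ψ (-p.snd)} →
          q ∈ {p : Dorroh R I | -p.snd ∈ J ∧ p.fst = ψ (-p.snd)} →
          p + q ∈ {p : Dorroh R I | -p.snd ∈ J ∧ p.fst = ψ (-p.snd)} := by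
        intro p q hpC hqC
        have hsnd : -(p + q).snd = -p.snd + -q.snd := by rw [Dorroh.add_snd, neg_add]
        refine ⟨?_, ?_⟩
        · rw [hsnd]; exact haddJ _ hpC.1 _ hqC.1
        · rw [Dorroh.add_fst, hpC.2, hqC.2, hsnd, hψadd _ hpC.1 _ hqC.1]
      have pfneg : ∀ {p : Dorroh R I},
          p ∈ {p : Dorroh R I | -p.snd ∈ J ∧ p.fst = ψ (-p.snd)} →
          -p ∈ {p : Dorroh R I | -p.snd ∈ J ∧ p.fst = ψ (-p.snd)} := by
        intro p hpC
        refine ⟨?_, ?_⟩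
        · rw [Dorroh.neg_snd]; exact hnegJ _ hpC.1
        · rw [Dorroh.neg_fst, Dorroh.neg_snd, hψneg _ hpC.1, hpC.2]
      have pfleft : ∀ {x y : Dorroh R I},
          y ∈ {p : Dorroh R I | -p.snd ∈ J ∧ p.fst = ψ (-p.snd)} →
          x * y ∈ {p : Dorroh R I | -p.snd ∈ J ∧ p.fst = ψ (-p.snd)} := by
        intro x y hyC
        have hj : -y.snd ∈ J := hyC.1
        have hxyj : x.snd * (-y.snd) = op (ψ (-y.snd)) • x.snd := (hrel x.snd _ hj).1
        have hsnd : (x * y).snd = -(x.fst • (-y.snd)) := by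
          rw [Dorroh.mul_snd, hyC.2]
          have e1 : x.snd * y.snd = -(op (ψ (-y.snd)) • x.snd) := by
            rw [← hxyj, mul_neg, neg_neg]
          have e2 : x.fst • y.snd = -(x.fst • (-y.snd)) := by rw [smul_neg, neg_neg]
          rw [e1, e2]
          abel
        refine ⟨?_, ?_⟩
        · rw [hsnd, neg_neg]; exact hsmulJ _ _ hj
        · rw [Dorroh.mul_fst, hyC.2, hsnd, neg_neg, hψsmul _ _ hj]
      have pfright : ∀ {x y : Dorroh R I},
          x ∈ {p : Dorroh R I | -p.snd ∈ J ∧ p.fst = ψ (-p.snd)} →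
          x * y ∈ {p : Dorroh R I | -p.snd ∈ J ∧ p.fst = ψ (-p.snd)} := by
        intro x y hxC
        have hj : -x.snd ∈ J := hxC.1
        have hsnd : (x * y).snd = -(op y.fst • (-x.snd)) := by
          rw [Dorroh.mul_snd, hxC.2]
          have e1 : ψ (-x.snd) • y.snd = -(x.snd * y.snd) := by
            rw [← (hrel y.snd _ hj).2, neg_mul]
          have e2 : op y.fst • x.snd = -(op y.fst • (-x.snd)) := by rw [smul_neg, neg_neg]
          rw [e1, e2]
          abel
        refine ⟨?_, ?_⟩
        · rw [hsnd, neg_neg]; exact hopJ _ _ hj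
        · rw [Dorroh.mul_fst, hxC.2, hsnd, neg_neg, hψop _ _ hj]
      set K : TwoSidedIdeal (Dorroh R I) :=
        TwoSidedIdeal.mk' {p : Dorroh R I | -p.snd ∈ J ∧ p.fst = ψ (-p.snd)}
          pf0 pfadd pfneg pfleft pfright with hK
      set I₀ : TwoSidedIdeal (Dorroh R I) :=
        TwoSidedIdeal.mk' {p : Dorroh R I | p.fst = 0}
          rfl
          (fun hx hy => by
            simp only [Set.mem_setOf_eq] at *; rw [Dorroh.add_fst, hx, hy, add_zero])
          (fun hx => by
            simp only [Set.mem_setOf_eq] at *; rw [Dorroh.neg_fst, hx, neg_zero])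
          (fun hy => by
            simp only [Set.mem_setOf_eq] at *; rw [Dorroh.mul_fst, hy, mul_zero])
          (fun hx => by
            simp only [Set.mem_setOf_eq] at *; rw [Dorroh.mul_fst, hx, zero_mul]) with hI₀
      have hprod : ∀ x ∈ K, ∀ y ∈ I₀, x * y = 0 := by
        intro x hx y hy
        rw [hK, TwoSidedIdeal.mem_mk'] at hx
        rw [hI₀, TwoSidedIdeal.mem_mk'] at hy
        have e1 : (-x.snd) * y.snd = ψ (-x.snd) • y.snd := (hrel y.snd _ hx.1).2
        have e2 : x.snd * y.snd = -(ψ (-x.snd) • y.snd) := by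
          rw [← e1, neg_mul, neg_neg]
        ext
        · rw [Dorroh.mul_fst, hy, mul_zero, Dorroh.zero_fst]
        · rw [Dorroh.mul_snd, hy, hx.2, e2, Dorroh.zero_snd]
          simp
      rcases hp K I₀ hprod with hbot | hbot
      · have hmem : (⟨ψ j₀, -j₀⟩ : Dorroh R I) ∈ K := by
          rw [hK, TwoSidedIdeal.mem_mk']
          constructor
          · show -(-j₀) ∈ J
            rw [neg_neg]; exact hj₀J
          · show ψ j₀ = ψ (-(-j₀))
            rw [neg_neg]
        have := (tsi_eq_bot_iff K).1 hbot _ hmem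
        have hsnd := congrArg Dorroh.snd this
        rw [Dorroh.zero_snd] at hsnd
        exact hj₀ (neg_eq_zero.mp hsnd)
      · obtain ⟨x₀, hx₀⟩ := hI
        have hmem : (⟨0, x₀⟩ : Dorroh R I) ∈ I₀ := by
          rw [hI₀, TwoSidedIdeal.mem_mk']; rfl
        have := (tsi_eq_bot_iff I₀).1 hbot _ hmem
        exact hx₀ (congrArg Dorroh.snd this)
  · -- converse direction
    rintro ⟨h1, h2, h3⟩
    have key : ∀ N : TwoSidedIdeal (Dorroh R I),
        (∀ x : I, (⟨0, x⟩ : Dorroh R I) ∈ N → x = 0) → N = ⊥ := by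
      intro N hNI
      rw [tsi_eq_bot_iff]
      by_contra hne
      push_neg at hne
      obtain ⟨q₀, hq₀N, hq₀⟩ := hne
      have hrel : ∀ q, q ∈ N → ∀ x : I,
          q.fst • x + q.snd * x = 0 ∧ op q.fst • x + x * q.snd = 0 := by
        intro q hq x
        constructor
        · have hmem : q * ⟨0, x⟩ ∈ N := N.mul_mem_right _ _ hq
          have he : q * ⟨0, x⟩ = (⟨0, q.fst • x + q.snd * x⟩ : Dorroh R I) := by
            ext <;> simp
          rw [he] at hmem
          exact hNI _ hmem
        · have hmem : (⟨0, x⟩ : Dorroh R I) * q ∈ N := N.mul_mem_left _ _ hq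
          have he : (⟨0, x⟩ : Dorroh R I) * q = ⟨0, op q.fst • x + x * q.snd⟩ := by
            ext <;> simp [add_comm]
          rw [he] at hmem
          exact hNI _ hmem
      have hfst0 : ∀ q, q ∈ N → q.snd = 0 → q.fst = 0 := by
        intro q hq h0
        have hmem : q.fst ∈ annR R I := by
          intro x
          have ha := (hrel q hq x).1
          have hb := (hrel q hq x).2
          rw [h0] at ha hb
          rw [zero_mul, add_zero] at ha
          rw [mul_zero, add_zero] at hb
          exact ⟨ha, hb⟩
        rwa [h2, Set.mem_singleton_iff] at hmem
      have huniq : ∀ q, q ∈ N → ∀ q', q' ∈ N → q.snd = q'.snd → q.fst = q'.fst := by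
        intro q hq q' hq' hsnd
        have hd : q - q' ∈ N := N.sub_mem hq hq'
        have hs : (q - q').snd = q.snd - q'.snd := by
          rw [sub_eq_add_neg, Dorroh.add_snd, Dorroh.neg_snd, ← sub_eq_add_neg]
        have hf : (q - q').fst = q.fst - q'.fst := by
          rw [sub_eq_add_neg, Dorroh.add_fst, Dorroh.neg_fst, ← sub_eq_add_neg]
        have : (q - q').fst = 0 := hfst0 _ hd (by rw [hs, hsnd, sub_self])
        rw [hf] at this
        exact sub_eq_zero.mp this
      set ψ : I → R := fun x =>
        if h : ∃ q : Dorroh R I, q ∈ N ∧ q.snd = x then -h.choose.fst else 0 with hψdef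
      have hψ : ∀ q, q ∈ N → ψ q.snd = -q.fst := by
        intro q hq
        have hex : ∃ p : Dorroh R I, p ∈ N ∧ p.snd = q.snd := ⟨q, hq, rfl⟩
        have e : ψ q.snd = -hex.choose.fst := by
          rw [hψdef]; exact dif_pos hex
        rw [e, huniq _ hex.choose_spec.1 _ hq hex.choose_spec.2]
      apply h3
      refine ⟨{x | ∃ q, q ∈ N ∧ q.snd = x}, ψ, ?_, ?_, ?_, ?_⟩
      · -- R-subrng
        refine ⟨⟨0, N.zero_mem, rfl⟩, ?_, ?_, ?_, ?_, ?_⟩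
        · rintro x ⟨q, hq, rfl⟩ y ⟨q', hq', rfl⟩
          exact ⟨q + q', N.add_mem hq hq', rfl⟩
        · rintro x ⟨q, hq, rfl⟩
          exact ⟨-q, N.neg_mem hq, rfl⟩
        · rintro x ⟨q, hq, rfl⟩ y ⟨q', hq', rfl⟩
          refine ⟨-(q * q'), N.neg_mem (N.mul_mem_right _ _ hq), ?_⟩
          have e1 : op q'.fst • q.snd = -(q.snd * q'.snd) :=
            eq_neg_of_add_eq_zero_left (hrel q' hq' q.snd).2
          have e2 : q.fst • q'.snd = -(q.snd * q'.snd) :=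
            eq_neg_of_add_eq_zero_left (hrel q hq q'.snd).1
          rw [Dorroh.neg_snd, Dorroh.mul_snd, e1, e2]
          abel
        · rintro r x ⟨q, hq, rfl⟩
          refine ⟨(⟨r, 0⟩ : Dorroh R I) * q, N.mul_mem_left _ _ hq, ?_⟩
          rw [Dorroh.mul_snd]
          simp
        · rintro r x ⟨q, hq, rfl⟩
          refine ⟨q * (⟨r, 0⟩ : Dorroh R I), N.mul_mem_right _ _ hq, ?_⟩
          rw [Dorroh.mul_snd]
          simp
      · -- nonzero
        refine ⟨q₀.snd, ⟨q₀, hq₀N, rfl⟩, ?_⟩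
        intro hsnd
        apply hq₀
        have hfz := hfst0 _ hq₀N hsnd
        ext
        · rw [hfz, Dorroh.zero_fst]
        · rw [hsnd, Dorroh.zero_snd]
      · -- R-hom on J
        refine ⟨?_, ?_, ?_, ?_⟩
        · rintro x ⟨q, hq, rfl⟩ y ⟨q', hq', rfl⟩
          have e := hψ (q + q') (N.add_mem hq hq')
          rw [Dorroh.add_snd, Dorroh.add_fst] at e
          rw [e, hψ q hq, hψ q' hq', neg_add]
        · rintro x ⟨q, hq, rfl⟩ y ⟨q', hq', rfl⟩
          have e1 : op q'.fst • q.snd = -(q.snd * q'.snd) :=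
            eq_neg_of_add_eq_zero_left (hrel q' hq' q.snd).2
          have e2 : q.fst • q'.snd = -(q.snd * q'.snd) :=
            eq_neg_of_add_eq_zero_left (hrel q hq q'.snd).1
          have hw : (-(q * q') : Dorroh R I) ∈ N := N.neg_mem (N.mul_mem_right _ _ hq)
          have hsnd : (-(q * q') : Dorroh R I).snd = q.snd * q'.snd := by
            rw [Dorroh.neg_snd, Dorroh.mul_snd, e1, e2]
            abel
          have e := hψ _ hw
          rw [hsnd, Dorroh.neg_fst, Dorroh.mul_fst, neg_neg] at e
          rw [e, hψ q hq, hψ q' hq', neg_mul_neg]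
        · rintro r x ⟨q, hq, rfl⟩
          have hw : (⟨r, 0⟩ : Dorroh R I) * q ∈ N := N.mul_mem_left _ _ hq
          have hsnd : ((⟨r, 0⟩ : Dorroh R I) * q).snd = r • q.snd := by
            rw [Dorroh.mul_snd]; simp
          have hfst : ((⟨r, 0⟩ : Dorroh R I) * q).fst = r * q.fst := by
            rw [Dorroh.mul_fst]
          have e := hψ _ hw
          rw [hsnd, hfst] at e
          rw [e, hψ q hq, mul_neg]
        · rintro r x ⟨q, hq, rfl⟩
          have hw : q * (⟨r, 0⟩ : Dorroh R I) ∈ N := N.mul_mem_right _ _ hq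
          have hsnd : (q * (⟨r, 0⟩ : Dorroh R I)).snd = op r • q.snd := by
            rw [Dorroh.mul_snd]; simp
          have hfst : (q * (⟨r, 0⟩ : Dorroh R I)).fst = q.fst * r := by
            rw [Dorroh.mul_fst]
          have e := hψ _ hw
          rw [hsnd, hfst] at e
          rw [e, hψ q hq, neg_mul]
      · -- relations
        rintro i j ⟨q, hq, rfl⟩
        rw [hψ q hq]
        constructor
        · have h' : i * q.snd = -(op q.fst • i) :=
            eq_neg_of_add_eq_zero_right (hrel q hq i).2
          rw [h', op_neg, neg_smul]
        · have h' : q.snd * i = -(q.fst • i) :=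
            eq_neg_of_add_eq_zero_right (hrel q hq i).1
          rw [h', neg_smul]
    intro L M hLM
    have res : ∀ N : TwoSidedIdeal (Dorroh R I), ∃ N' : TwoSidedIdeal I,
        ∀ x : I, x ∈ N' ↔ (⟨0, x⟩ : Dorroh R I) ∈ N := by
      intro N
      have e0 : (⟨0, (0 : I)⟩ : Dorroh R I) = 0 := rfl
      have eadd : ∀ x y : I, (⟨0, x + y⟩ : Dorroh R I) = ⟨0, x⟩ + ⟨0, y⟩ := by
        intro x y; ext <;> simp
      have eneg : ∀ x : I, (⟨0, -x⟩ : Dorroh R I) = -⟨0, x⟩ := by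
        intro x; ext <;> simp
      have emul : ∀ x y : I, (⟨0, x * y⟩ : Dorroh R I) = ⟨0, x⟩ * ⟨0, y⟩ := by
        intro x y; ext <;> simp
      refine ⟨TwoSidedIdeal.mk' {x : I | (⟨0, x⟩ : Dorroh R I) ∈ N}
        (by show (⟨0, (0 : I)⟩ : Dorroh R I) ∈ N; rw [e0]; exact N.zero_mem)
        (fun {x y} hx hy => by
          show (⟨0, x + y⟩ : Dorroh R I) ∈ N; rw [eadd]; exact N.add_mem hx hy)
        (fun {x} hx => by
          show (⟨0, -x⟩ : Dorroh R I) ∈ N; rw [eneg]; exact N.neg_mem hx)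
        (fun {x y} hy => by
          show (⟨0, x * y⟩ : Dorroh R I) ∈ N; rw [emul]; exact N.mul_mem_left _ _ hy)
        (fun {x y} hx => by
          show (⟨0, x * y⟩ : Dorroh R I) ∈ N; rw [emul]; exact N.mul_mem_right _ _ hx),
        fun x => TwoSidedIdeal.mem_mk' _ _ _ _ _ _ _⟩
    obtain ⟨LI, hLI⟩ := res L
    obtain ⟨MI, hMI⟩ := res M
    have hLMI : ∀ x ∈ LI, ∀ y ∈ MI, x * y = 0 := by
      intro x hx y hy
      have h' := hLM _ ((hLI x).1 hx) _ ((hMI y).1 hy)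
      have he : (⟨0, x⟩ : Dorroh R I) * ⟨0, y⟩ = ⟨0, x * y⟩ := by ext <;> simp
      rw [he] at h'
      exact congrArg Dorroh.snd h'
    rcases h1 LI MI hLMI with hbot | hbot
    · left
      exact key L (fun x hx => (tsi_eq_bot_iff LI).1 hbot x ((hLI x).2 hx))
    · right
      exact key M (fun x hx => (tsi_eq_bot_iff MI).1 hbot x ((hMI x).2 hx))
end

section
/- Let φ: I → R be an R-homomorphism satisfying iφ(j) = ij = φ(i)j for all i,j ∈ I. Then the map ψ: E(R,I) → E(R,I) defined by ψ(r,i) = (r + φ(i), -i) is a ring automorphism of E(R,I) with ψ² = id, which maps 0 ⊕ I onto I_φ = {(φ(i), -i) : i ∈ I} and fixes R ⊕ 0 setwise. -/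
open MulOpposite

variable (R I : Type*) [Ring R] [NonUnitalRing I] [Module R I] [Module Rᵐᵒᵖ I] [IsRRng R I]

open MulOpposite


/-- Given an `R`-homomorphism `φ : I → R` with `iφ(j) = ij = φ(i)j`, the map
`ψ(r,i) = (r + φ(i), -i)` is a ring automorphism of `E(R,I)` with `ψ² = id`, mapping
`0 ⊕ I` onto `I_φ = {(φ(i), -i) : i ∈ I}` and fixing `R ⊕ 0` setwise. -/
theorem dorroh_twist_automorphism (φ : I → R) (hφ : IsRHom R φ)
    (hcomp : ∀ i j : I, op (φ j) • i = i * j ∧ φ i • j = i * j) :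
    ∃ ψ : Dorroh R I → Dorroh R I,
      (∀ p : Dorroh R I, ψ p = ⟨p.fst + φ p.snd, -p.snd⟩) ∧
      Function.Bijective ψ ∧
      ψ 1 = 1 ∧
      (∀ p q : Dorroh R I, ψ (p + q) = ψ p + ψ q) ∧
      (∀ p q : Dorroh R I, ψ (p * q) = ψ p * ψ q) ∧
      (∀ p : Dorroh R I, ψ (ψ p) = p) ∧
      ψ '' {p : Dorroh R I | p.fst = 0} = {q : Dorroh R I | ∃ i : I, q = ⟨φ i, -i⟩} ∧
      ψ '' {p : Dorroh R I | p.snd = 0} = {p : Dorroh R I | p.snd = 0} := by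
  obtain ⟨hadd, hmul, hsmul, hopsmul⟩ := hφ
  have hz : φ 0 = 0 := by
    have h := hadd 0 0
    rw [add_zero] at h
    exact left_eq_add.mp h
  have hneg : ∀ i : I, φ (-i) = -φ i := by
    intro i
    have h := hadd i (-i)
    rw [add_neg_cancel, hz] at h
    exact eq_neg_of_add_eq_zero_right h.symm
  refine ⟨fun p => ⟨p.fst + φ p.snd, -p.snd⟩, fun _ => rfl, ?_, ?_, ?_, ?_, ?_, ?_, ?_⟩
  · -- bijective: it is an involution
    have hinv : ∀ p : Dorroh R I,
        (fun p : Dorroh R I => (⟨p.fst + φ p.snd, -p.snd⟩ : Dorroh R I))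
          ((fun p : Dorroh R I => (⟨p.fst + φ p.snd, -p.snd⟩ : Dorroh R I)) p) = p := by
      intro p
      ext <;> simp [hneg]
    exact Function.bijective_iff_has_inverse.mpr ⟨_, fun p => hinv p, fun p => hinv p⟩
  · ext <;> simp [hz, Dorroh.one_def]
  · intro p q; ext <;> simp [hadd, Dorroh.add_def] <;> abel
  · intro p q
    ext
    · simp only [Dorroh.mul_fst, Dorroh.mul_snd, hadd, hmul, hsmul, hopsmul]
      noncomm_ring
    · simp only [Dorroh.mul_snd, Dorroh.mul_fst, op_add, add_smul, smul_add, smul_neg,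
        neg_neg, neg_mul, mul_neg]
      rw [(hcomp p.snd q.snd).1, (hcomp p.snd q.snd).2]
      abel
  · intro p; ext <;> simp [hneg]
  · ext q
    constructor
    · rintro ⟨p, hp, rfl⟩
      exact ⟨p.snd, by ext <;> simp [Set.mem_setOf_eq.mp hp]⟩
    · rintro ⟨i, rfl⟩
      exact ⟨⟨0, i⟩, rfl, by ext <;> simp⟩
  · ext q
    constructor
    · rintro ⟨p, hp, rfl⟩
      simpa using Set.mem_setOf_eq.mp hp ▸ rfl
    · intro hq
      exact ⟨q, hq, by ext <;> simp [Set.mem_setOf_eq.mp hq, hz]⟩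
end
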